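/- arXiv:2204.01808 — 10 statements merged into one kernel-verified Lean document; each statement's English description precedes it below -/
import Mathlib

section
/- For all positive integers n and ℓ, the number of length-n level-ℓ sequence patterns is |T_{n,ℓ}| = ℓ^n/ℓ! + Σ_{m=2}^{ℓ} ((ℓ−m)^n/(ℓ−m)!) · Σ_{i=0}^{m} (−1)^i/i!, where the identity is an identity of rational numbers. -/
/-- Two sequences are equivalent if one is obtained from the other by relabeling symbols. -/
def seqSetoid (n ℓ : ℕ) : Setoid (Fin n → Fin ℓ) where
  r q p := ∃ φ : Equiv.Perm (Fin ℓ), ⇑φ ∘ q = p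
  iseqv := by
    constructor
    · intro q; exact ⟨Equiv.refl _, rfl⟩
    · rintro q p ⟨φ, rfl⟩
      exact ⟨φ.symm, by funext i; simp⟩
    · rintro q p r ⟨φ₁, rfl⟩ ⟨φ₂, rfl⟩
      exact ⟨φ₁.trans φ₂, by funext i; simp⟩

/-- The type of length-`n` level-`ℓ` sequence patterns. -/
def SeqPattern (n ℓ : ℕ) : Type := Quotient (seqSetoid n ℓ)

open Finset

section Aux

lemma ker_comp_of_injective {α β γ : Type*} {f : β → γ} {g : α → β}
    (hf : Function.Injective f) : Setoid.ker (f ∘ g) = Setoid.ker g :=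
  Setoid.ext fun a b => by simp [Setoid.ker_def, hf.eq_iff]

lemma exists_perm_of_ker_eq {n ℓ : ℕ} {q p : Fin n → Fin ℓ}
    (h : Setoid.ker q = Setoid.ker p) : ∃ φ : Equiv.Perm (Fin ℓ), ⇑φ ∘ q = p := by
  classical
  let eqv : Quotient (Setoid.ker q) ≃ Quotient (Setoid.ker p) :=
    Quotient.congrRight (fun a b => by rw [h])
  let e : {x // x ∈ Set.range q} ≃ {x // x ∈ Set.range p} :=
    ((Setoid.quotientKerEquivRange q).symm.trans eqv).trans (Setoid.quotientKerEquivRange p)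
  refine ⟨e.extendSubtype, funext fun x => ?_⟩
  have hm : q x ∈ Set.range q := ⟨x, rfl⟩
  have h1 : e.extendSubtype (q x) = e ⟨q x, hm⟩ :=
    Equiv.extendSubtype_apply_of_mem e _ hm
  have h2 : (Setoid.quotientKerEquivRange q).symm ⟨q x, hm⟩
      = Quotient.mk (Setoid.ker q) x := by
    rw [Equiv.symm_apply_eq]
    rfl
  have h3 : (e ⟨q x, hm⟩ : Fin ℓ) = p x := by
    show ((Setoid.quotientKerEquivRange p)
      (eqv ((Setoid.quotientKerEquivRange q).symm ⟨q x, hm⟩)) : Fin ℓ) = p x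
    rw [h2]
    rfl
  simp only [Function.comp_apply, h1, h3]

/-- Functions with kernel `s` correspond to embeddings of the quotient. -/
def kerFiberEquiv {α β : Type*} (s : Setoid α) :
    {q : α → β // Setoid.ker q = s} ≃ (Quotient s ↪ β) where
  toFun qh := ⟨Quotient.lift qh.1 (fun a b hab => by
      have h2 := qh.2
      rw [← h2] at hab
      exact hab), by
      intro x y hxy
      induction x using Quotient.ind
      induction y using Quotient.ind
      refine Quotient.sound ?_
      have h2 := qh.2
      rw [← h2]
      exact hxy⟩
  invFun f := ⟨f ∘ Quotient.mk'',
    by rw [ker_comp_of_injective f.injective]; exact Setoid.ker_mk_eq s⟩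
  left_inv qh := Subtype.ext (funext fun a => rfl)
  right_inv f := by
    ext x
    induction x using Quotient.ind
    rfl

instance setoidFinite {α : Type*} [Finite α] : Finite (Setoid α) :=
  Finite.of_injective (fun s => s.r) fun a b h => by
    cases a; cases b; cases h; rfl

lemma card_fun_eq (n j : ℕ) [Fintype (Setoid (Fin n))] :
    j ^ n = ∑ s : Setoid (Fin n), j.descFactorial (Nat.card (Quotient s)) := by
  classical
  have h1 : j ^ n = Fintype.card (Fin n → Fin j) := by simp
  rw [h1, ← Fintype.card_congr (Equiv.sigmaFiberEquiv (fun q : Fin n → Fin j => Setoid.ker q)),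
    Fintype.card_sigma]
  refine Finset.sum_congr rfl fun s _ => ?_
  letI : Fintype (Quotient s) := Fintype.ofFinite _
  rw [Fintype.card_congr (kerFiberEquiv s), Fintype.card_embedding_eq,
    Fintype.card_fin, Nat.card_eq_fintype_card]

lemma card_patterns (n ℓ : ℕ) :
    Nat.card (SeqPattern n ℓ)
      = Nat.card {s : Setoid (Fin n) // Nat.card (Quotient s) ≤ ℓ} := by
  classical
  have bound : ∀ q : Fin n → Fin ℓ, Nat.card (Quotient (Setoid.ker q)) ≤ ℓ := by
    intro q
    have hinj : Function.Injective
        (fun x => ((Setoid.quotientKerEquivRange q x : Fin ℓ))) :=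
      Subtype.val_injective.comp (Setoid.quotientKerEquivRange q).injective
    simpa using Nat.card_le_card_of_injective _ hinj
  let F : SeqPattern n ℓ → {s : Setoid (Fin n) // Nat.card (Quotient s) ≤ ℓ} :=
    Quotient.lift (fun q => ⟨Setoid.ker q, bound q⟩)
      (fun a b hab => by
        obtain ⟨φ, rfl⟩ := hab
        exact Subtype.ext (ker_comp_of_injective φ.injective).symm)
  refine Nat.card_congr (Equiv.ofBijective F ⟨?_, ?_⟩)
  · intro x y
    induction x using Quotient.ind
    induction y using Quotient.ind
    intro hxy
    exact Quotient.sound (exists_perm_of_ker_eq (congrArg Subtype.val hxy))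
  · rintro ⟨s, hs⟩
    letI : Fintype (Quotient s) := Fintype.ofFinite _
    have hcard : Fintype.card (Quotient s) ≤ Fintype.card (Fin ℓ) := by
      rw [Fintype.card_fin, ← Nat.card_eq_fintype_card]; exact hs
    obtain ⟨f⟩ := Function.Embedding.nonempty_of_card_le hcard
    refine ⟨Quotient.mk _ (f ∘ Quotient.mk''), Subtype.ext ?_⟩
    show Setoid.ker (⇑f ∘ Quotient.mk'') = s
    rw [ker_comp_of_injective f.injective]
    exact Setoid.ker_mk_eq s

/-- Partial sums of the exponential series at `-1`. -/
noncomputable def Efn (m : ℕ) : ℚ := ∑ i ∈ range (m + 1), (-1 : ℚ) ^ i / (Nat.factorial i : ℚ)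

lemma Efn_zero : Efn 0 = 1 := by simp [Efn]

lemma Efn_one : Efn 1 = 0 := by
  simp [Efn, Finset.sum_range_succ, Nat.factorial]

lemma alt_sum_choose (N : ℕ) (hN : N ≠ 0) :
    ∑ t ∈ range (N + 1), (-1 : ℚ) ^ (N - t) * (N.choose t : ℚ) = 0 := by
  have h := Finset.sum_range_reflect
    (fun t => (-1 : ℚ) ^ (N - t) * (N.choose t : ℚ)) (N + 1)
  have h2 : ∀ t ∈ range (N + 1),
      (-1 : ℚ) ^ (N - (N + 1 - 1 - t)) * (N.choose (N + 1 - 1 - t) : ℚ)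
        = (-1 : ℚ) ^ t * (N.choose t : ℚ) := by
    intro t ht
    rw [Finset.mem_range, Nat.lt_succ_iff] at ht
    have e1 : N + 1 - 1 - t = N - t := by omega
    have e2 : N - (N - t) = t := by omega
    rw [e1, e2, Nat.choose_symm ht]
  rw [Finset.sum_congr rfl h2] at h
  rw [← h]
  have := Int.alternating_sum_range_choose_of_ne hN
  have hq : ((∑ i ∈ range (N + 1), (-1 : ℤ) ^ i * (N.choose i : ℤ) : ℤ) : ℚ) = 0 := by
    rw [this]; rfl
  push_cast at hq
  convert hq using 1

lemma sum_Efn (M : ℕ) :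
    ∑ t ∈ range (M + 1), Efn (M - t) / (Nat.factorial t : ℚ) = 1 := by
  induction M with
  | zero => simp [Efn]
  | succ M ih =>
    rw [Finset.sum_range_succ]
    have key : ∀ t ∈ range (M + 1),
        Efn (M + 1 - t) / (Nat.factorial t : ℚ)
          = Efn (M - t) / (Nat.factorial t : ℚ)
            + (-1 : ℚ) ^ (M + 1 - t) * ((M + 1).choose t : ℚ)
              / (Nat.factorial (M + 1) : ℚ) := by
      intro t ht
      rw [Finset.mem_range, Nat.lt_succ_iff] at ht
      have e1 : M + 1 - t = (M - t) + 1 := by omega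
      have e2 : Efn ((M - t) + 1) = Efn (M - t)
          + (-1 : ℚ) ^ ((M - t) + 1) / (Nat.factorial ((M - t) + 1) : ℚ) := by
        rw [Efn, Finset.sum_range_succ]; rfl
      rw [e1, e2, add_div]
      congr 1
      have hch : (((M + 1).choose t : ℚ)) = (Nat.factorial (M + 1) : ℚ)
          / ((Nat.factorial t : ℚ) * (Nat.factorial (M + 1 - t) : ℚ)) :=
        Nat.cast_choose ℚ (by omega)
      rw [hch, e1]
      have h1 : (Nat.factorial ((M - t) + 1) : ℚ) ≠ 0 := by positivity
      have h2 : (Nat.factorial t : ℚ) ≠ 0 := by positivity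
      have h3 : (Nat.factorial (M + 1) : ℚ) ≠ 0 := by positivity
      field_simp
    rw [Finset.sum_congr rfl key, Finset.sum_add_distrib, ih]
    have e0 : M + 1 - (M + 1) = 0 := by omega
    rw [e0, Efn_zero]
    rw [← Finset.sum_div]
    have halt : ∑ t ∈ range (M + 1), (-1 : ℚ) ^ (M + 1 - t) * ((M + 1).choose t : ℚ)
        = -1 := by
      have h := alt_sum_choose (M + 1) (by omega)
      rw [Finset.sum_range_succ] at h
      simp only [Nat.sub_self, pow_zero, Nat.choose_self, Nat.cast_one, one_mul] at h
      linarith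
    rw [halt]
    have h3 : (Nat.factorial (M + 1) : ℚ) ≠ 0 := by positivity
    field_simp
    ring

lemma descFac_inner_sum (ℓ k : ℕ) :
    ∑ j ∈ range (ℓ + 1), ((j.descFactorial k : ℚ) / (Nat.factorial j : ℚ)) * Efn (ℓ - j)
      = if k ≤ ℓ then 1 else 0 := by
  by_cases hk : k ≤ ℓ
  · rw [if_pos hk]
    have hsplit : ℓ + 1 = k + (ℓ - k + 1) := by omega
    rw [hsplit, Finset.sum_range_add]
    have h0 : ∑ i ∈ range k,
        ((i.descFactorial k : ℚ) / (Nat.factorial i : ℚ)) * Efn (ℓ - i) = 0 := by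
      refine Finset.sum_eq_zero fun i hi => ?_
      rw [Finset.mem_range] at hi
      rw [Nat.descFactorial_eq_zero_iff_lt.mpr hi]
      simp
    rw [h0, zero_add]
    have h1 : ∀ t ∈ range (ℓ - k + 1),
        (((k + t).descFactorial k : ℚ) / (Nat.factorial (k + t) : ℚ)) * Efn (ℓ - (k + t))
          = Efn ((ℓ - k) - t) / (Nat.factorial t : ℚ) := by
      intro t ht
      have e1 : ℓ - (k + t) = (ℓ - k) - t := by omega
      have hfac : (Nat.factorial t) * ((k + t).descFactorial k) = Nat.factorial (k + t) := by
        have := Nat.factorial_mul_descFactorial (Nat.le_add_right k t)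
        simpa [Nat.add_sub_cancel_left] using this
      have hd : ((k + t).descFactorial k : ℚ) ≠ 0 := by
        have : (k + t).descFactorial k ≠ 0 := by
          rw [Ne, Nat.descFactorial_eq_zero_iff_lt]
          omega
        exact_mod_cast Nat.cast_ne_zero.mpr this
      have ht0 : (Nat.factorial t : ℚ) ≠ 0 := by positivity
      rw [e1, ← hfac]
      push_cast
      field_simp
    rw [Finset.sum_congr rfl h1]
    exact sum_Efn (ℓ - k)
  · rw [if_neg hk]
    refine Finset.sum_eq_zero fun j hj => ?_
    rw [Finset.mem_range, Nat.lt_succ_iff] at hj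
    rw [Nat.descFactorial_eq_zero_iff_lt.mpr (by omega)]
    simp

lemma rhs_reindex (n ℓ : ℕ) (hℓ : 1 ≤ ℓ) :
    (ℓ : ℚ) ^ n / (Nat.factorial ℓ : ℚ) +
        ∑ m ∈ Finset.Icc 2 ℓ,
          (((ℓ - m : ℕ) : ℚ) ^ n / (Nat.factorial (ℓ - m) : ℚ)) * Efn m
      = ∑ j ∈ range (ℓ + 1), (((j : ℕ) : ℚ) ^ n / (Nat.factorial j : ℚ)) * Efn (ℓ - j) := by
  rw [← Finset.sum_range_reflect]
  have h2 : ∀ m ∈ range (ℓ + 1),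
      ((((ℓ + 1 - 1 - m : ℕ)) : ℚ) ^ n / (Nat.factorial (ℓ + 1 - 1 - m) : ℚ))
          * Efn (ℓ - (ℓ + 1 - 1 - m))
        = (((ℓ - m : ℕ) : ℚ) ^ n / (Nat.factorial (ℓ - m) : ℚ)) * Efn m := by
    intro m hm
    rw [Finset.mem_range, Nat.lt_succ_iff] at hm
    have e1 : ℓ + 1 - 1 - m = ℓ - m := by omega
    have e2 : ℓ - (ℓ - m) = m := by omega
    rw [e1, e2]
  rw [Finset.sum_congr rfl h2]
  have hsplit : range (ℓ + 1) = {0, 1} ∪ Finset.Icc 2 ℓ := by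
    ext x
    simp only [Finset.mem_range, Finset.mem_union, Finset.mem_insert,
      Finset.mem_singleton, Finset.mem_Icc]
    omega
  have hdisj : Disjoint ({0, 1} : Finset ℕ) (Finset.Icc 2 ℓ) := by
    simp only [Finset.disjoint_left, Finset.mem_insert, Finset.mem_singleton,
      Finset.mem_Icc]
    rintro a (rfl | rfl) <;> omega
  rw [hsplit, Finset.sum_union hdisj, Finset.sum_pair (by omega)]
  have t0 : (((ℓ - 0 : ℕ) : ℚ) ^ n / (Nat.factorial (ℓ - 0) : ℚ)) * Efn 0
      = (ℓ : ℚ) ^ n / (Nat.factorial ℓ : ℚ) := by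
    rw [Efn_zero]; simp
  have t1 : (((ℓ - 1 : ℕ) : ℚ) ^ n / (Nat.factorial (ℓ - 1) : ℚ)) * Efn 1 = 0 := by
    rw [Efn_one]; ring
  rw [t0, t1, add_zero]

end Aux

/-- The number of length-`n` level-`ℓ` sequence patterns is
`ℓ^n/ℓ! + Σ_{m=2}^{ℓ} ((ℓ−m)^n/(ℓ−m)!) · Σ_{i=0}^{m} (−1)^i/i!`. -/
theorem card_seqPattern (n ℓ : ℕ) (hn : 1 ≤ n) (hℓ : 1 ≤ ℓ) :
    (Nat.card (SeqPattern n ℓ) : ℚ) =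
      (ℓ : ℚ) ^ n / (Nat.factorial ℓ : ℚ) +
        ∑ m ∈ Finset.Icc 2 ℓ,
          (((ℓ - m : ℕ) : ℚ) ^ n / (Nat.factorial (ℓ - m) : ℚ)) *
            ∑ i ∈ Finset.range (m + 1), (-1 : ℚ) ^ i / (Nat.factorial i : ℚ) := by
  classical
  letI : Fintype (Setoid (Fin n)) := Fintype.ofFinite _
  have hE : ∀ m : ℕ,
      (∑ i ∈ Finset.range (m + 1), (-1 : ℚ) ^ i / (Nat.factorial i : ℚ)) = Efn m :=
    fun m => rfl
  simp only [hE]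
  rw [rhs_reindex n ℓ hℓ]
  have hfun : ∀ j : ℕ, ((j : ℚ)) ^ n
      = ∑ s : Setoid (Fin n), ((j.descFactorial (Nat.card (Quotient s)) : ℕ) : ℚ) := by
    intro j
    have h := card_fun_eq n j
    calc ((j : ℚ)) ^ n = ((j ^ n : ℕ) : ℚ) := by push_cast; ring
      _ = _ := by rw [h, Nat.cast_sum]
  have lhs_eq : (Nat.card (SeqPattern n ℓ) : ℚ)
      = ∑ s : Setoid (Fin n), (if Nat.card (Quotient s) ≤ ℓ then (1 : ℚ) else 0) := by
    rw [card_patterns n ℓ, Nat.card_eq_fintype_card, Fintype.card_subtype,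
      Finset.card_filter]
    push_cast
    simp [apply_ite]
  rw [lhs_eq]
  symm
  calc ∑ j ∈ range (ℓ + 1), (((j : ℕ) : ℚ) ^ n / (Nat.factorial j : ℚ)) * Efn (ℓ - j)
      = ∑ j ∈ range (ℓ + 1), ∑ s : Setoid (Fin n),
          ((j.descFactorial (Nat.card (Quotient s)) : ℚ) / (Nat.factorial j : ℚ))
            * Efn (ℓ - j) := by
        refine Finset.sum_congr rfl fun j _ => ?_
        rw [hfun j, Finset.sum_div, Finset.sum_mul]
    _ = ∑ s : Setoid (Fin n), ∑ j ∈ range (ℓ + 1),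
          ((j.descFactorial (Nat.card (Quotient s)) : ℚ) / (Nat.factorial j : ℚ))
            * Efn (ℓ - j) := Finset.sum_comm
    _ = ∑ s : Setoid (Fin n), (if Nat.card (Quotient s) ≤ ℓ then (1 : ℚ) else 0) := by
        exact Finset.sum_congr rfl fun s _ => descFac_inner_sum ℓ _
end

section
/- For all positive integers n and ℓ, the number of length-n level-ℓ sequences in standard order is Σ_{m=1}^{ℓ} Σ_{i=0}^{m} ((−1)^i/i!) · ((m−i)^n/(m−i)!), where the identity is an identity of rational numbers. -/
open Finset

/-- A sequence is in standard order if each positive symbol value is preceded by its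
predecessor value at some earlier index. -/
def IsStandard {n ℓ : ℕ} (q : Fin n → Fin ℓ) : Prop :=
  ∀ i : Fin n, 0 < (q i).val → ∃ j : Fin n, j < i ∧ (q j).val = (q i).val - 1



lemma attained {n ℓ : ℕ} {q : Fin n → Fin ℓ} (h : IsStandard q) (k : ℕ) (i : Fin n) :
    ∃ j, (q j).val = (q i).val - k := by
  induction k with
  | zero => exact ⟨i, rfl⟩
  | succ k ih =>
    obtain ⟨j, hj⟩ := ih
    rcases Nat.eq_zero_or_pos ((q i).val - k) with h0 | hp
    · exact ⟨j, by omega⟩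
    · obtain ⟨j', _, hj'⟩ := h j (by omega)
      exact ⟨j', by omega⟩

lemma surj_of_top {n m : ℕ} {q : Fin n → Fin (m + 1)} (h : IsStandard q)
    (htop : ∃ i, (q i).val = m) : Function.Surjective q := by
  intro v
  obtain ⟨i, hi⟩ := htop
  obtain ⟨j, hj⟩ := attained h (m - v.val) i
  exact ⟨j, Fin.ext (by have := v.isLt; omega)⟩

lemma lt_of_not_surj {n m : ℕ} {q : Fin n → Fin (m + 1)} (h : IsStandard q)
    (hs : ¬ Function.Surjective q) (i : Fin n) : (q i).val < m := by
  have := (q i).isLt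
  rcases Nat.lt_or_ge (q i).val m with h' | h'
  · exact h'
  · exact absurd (surj_of_top h ⟨i, by omega⟩) hs

def equivNonSurj {n m : ℕ} :
    {q : Fin n → Fin (m + 1) // IsStandard q ∧ ¬ Function.Surjective q} ≃
      {q : Fin n → Fin m // IsStandard q} where
  toFun q := ⟨fun i => ⟨(q.1 i).val, lt_of_not_surj q.2.1 q.2.2 i⟩, by
    intro i hi
    obtain ⟨j, hj, hj'⟩ := q.2.1 i hi
    exact ⟨j, hj, hj'⟩⟩
  invFun q := ⟨fun i => (q.1 i).castSucc, by
    constructor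
    · intro i hi
      obtain ⟨j, hj, hj'⟩ := q.2 i hi
      exact ⟨j, hj, hj'⟩
    · intro hs
      obtain ⟨i, hi⟩ := hs (Fin.last m)
      have := (q.1 i).isLt
      have h2 : ((q.1 i).castSucc : Fin (m+1)).val = m := congrArg Fin.val hi
      rw [Fin.coe_castSucc] at h2
      omega⟩
  left_inv q := by ext i; rfl
  right_inv q := by ext i; rfl

lemma card_decomp {n m : ℕ} :
    Nat.card {q : Fin n → Fin (m + 1) // IsStandard q} =
      Nat.card {q : Fin n → Fin (m + 1) // IsStandard q ∧ Function.Surjective q} +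
        Nat.card {q : Fin n → Fin m // IsStandard q} := by
  classical
  rw [← Nat.card_congr (equivNonSurj (n := n) (m := m)), ← Nat.card_sum]
  apply Nat.card_congr
  refine ((Equiv.sumCompl (fun q : {q : Fin n → Fin (m+1) // IsStandard q} =>
    Function.Surjective q.1)).symm).trans ?_
  exact Equiv.sumCongr (Equiv.subtypeSubtypeEquivSubtypeInter _ _)
    (Equiv.subtypeSubtypeEquivSubtypeInter IsStandard (fun q => ¬ Function.Surjective q))

lemma card_zero {n : ℕ} (hn : 1 ≤ n) :
    Nat.card {q : Fin n → Fin 0 // IsStandard q} = 0 := by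
  have : IsEmpty (Fin n → Fin 0) := by
    refine ⟨fun f => (f ⟨0, hn⟩).elim0⟩
  have : IsEmpty {q : Fin n → Fin 0 // IsStandard q} := by
    exact Subtype.isEmpty_of_false fun q _ => (this.false q)
  exact Nat.card_of_isEmpty

lemma card_sum_surj {n : ℕ} (hn : 1 ≤ n) (ℓ : ℕ) :
    Nat.card {q : Fin n → Fin ℓ // IsStandard q} =
      ∑ m ∈ Finset.Icc 1 ℓ,
        Nat.card {q : Fin n → Fin m // IsStandard q ∧ Function.Surjective q} := by
  induction ℓ with
  | zero => simpa using card_zero hn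
  | succ ℓ ih =>
    rw [card_decomp, ih, Finset.sum_Icc_succ_top (by omega : 1 ≤ ℓ + 1)]
    ring


section Rank
variable {n m : ℕ}

/-- first occurrence index of value v for a surjective f -/
noncomputable def fO (f : Fin n → Fin m) (hf : Function.Surjective f) (v : Fin m) : Fin n :=
  (univ.filter (fun j => f j = v)).min' (by
    obtain ⟨j, hj⟩ := hf v
    exact ⟨j, by simp [hj]⟩)

lemma fO_map {f : Fin n → Fin m} (hf : Function.Surjective f) (v : Fin m) :
    f (fO f hf v) = v := by
  have := Finset.min'_mem (univ.filter (fun j => f j = v)) (by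
    obtain ⟨j, hj⟩ := hf v
    exact ⟨j, by simp [hj]⟩)
  simpa [fO] using this

lemma fO_le {f : Fin n → Fin m} (hf : Function.Surjective f) {v : Fin m} {j : Fin n}
    (hj : f j = v) : fO f hf v ≤ j :=
  Finset.min'_le _ _ (by simp [hj])

lemma fO_inj {f : Fin n → Fin m} (hf : Function.Surjective f) :
    Function.Injective (fO f hf) := by
  intro v w h
  rw [← fO_map hf v, ← fO_map hf w, h]

noncomputable def rk (f : Fin n → Fin m) (hf : Function.Surjective f) (v : Fin m) : ℕ :=
  (univ.filter (fun w => fO f hf w < fO f hf v)).card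

lemma rk_lt {f : Fin n → Fin m} (hf : Function.Surjective f) (v : Fin m) :
    rk f hf v < m := by
  have h1 : (univ.filter (fun w => fO f hf w < fO f hf v)) ⊆ univ.erase v := by
    intro w hw
    simp only [mem_filter, mem_univ, true_and] at hw
    exact Finset.mem_erase.mpr ⟨fun e => absurd (e ▸ hw) (lt_irrefl _), mem_univ _⟩
  calc rk f hf v ≤ (univ.erase v).card := Finset.card_le_card h1
    _ < univ.card := Finset.card_erase_lt_of_mem (mem_univ v)
    _ = m := by simp

lemma rk_strictMono {f : Fin n → Fin m} (hf : Function.Surjective f) {v w : Fin m}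
    (h : fO f hf v < fO f hf w) : rk f hf v < rk f hf w := by
  apply Finset.card_lt_card
  constructor
  · intro u hu
    simp only [mem_filter, mem_univ, true_and] at hu ⊢
    exact hu.trans h
  · intro hc
    have : v ∈ univ.filter (fun u => fO f hf u < fO f hf v) := hc (by simp [h])
    simp at this

lemma rk_lt_iff {f : Fin n → Fin m} (hf : Function.Surjective f) {v w : Fin m} :
    rk f hf v < rk f hf w ↔ fO f hf v < fO f hf w := by
  constructor
  · intro h
    rcases lt_trichotomy (fO f hf v) (fO f hf w) with h' | h' | h'
    · exact h'
    · exact absurd (fO_inj hf h') (by rintro rfl; exact lt_irrefl _ h)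
    · exact absurd (rk_strictMono hf h') (by omega)
  · exact rk_strictMono hf

/-- the ranking bijection as a Fin m → Fin m map -/
noncomputable def rkF (f : Fin n → Fin m) (hf : Function.Surjective f) (v : Fin m) : Fin m :=
  ⟨rk f hf v, rk_lt hf v⟩

lemma rkF_bij {f : Fin n → Fin m} (hf : Function.Surjective f) :
    Function.Bijective (rkF f hf) := by
  rw [Fintype.bijective_iff_injective_and_card]
  refine ⟨fun v w h => ?_, rfl⟩
  have h' : rk f hf v = rk f hf w := congrArg Fin.val h
  by_contra hvw
  rcases lt_trichotomy (fO f hf v) (fO f hf w) with h2 | h2 | h2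
  · exact absurd (rk_strictMono hf h2) (by omega)
  · exact hvw (fO_inj hf h2)
  · exact absurd (rk_strictMono hf h2) (by omega)

noncomputable def permOf (f : Fin n → Fin m) (hf : Function.Surjective f) :
    Equiv.Perm (Fin m) := Equiv.ofBijective (rkF f hf) (rkF_bij hf)

lemma stand_std {f : Fin n → Fin m} (hf : Function.Surjective f) :
    IsStandard (fun i => rkF f hf (f i)) := by
  intro i hi
  set v := f i with hv
  -- rank of v positive; find w with rank = rk v - 1
  obtain ⟨w, hw⟩ := (rkF_bij hf).2 ⟨rk f hf v - 1, by have := rk_lt hf v; omega⟩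
  have hww : rk f hf w = rk f hf v - 1 := congrArg Fin.val hw
  have hi' : 0 < rk f hf v := hi
  have hlt : fO f hf w < fO f hf v := by
    rw [← rk_lt_iff hf]
    omega
  refine ⟨fO f hf w, ?_, ?_⟩
  · exact lt_of_lt_of_le hlt (fO_le hf hv.symm)
  · show (rkF f hf (f (fO f hf w))).val = (rkF f hf (f i)).val - 1
    rw [fO_map hf w]
    simp only [rkF, ← hv]
    omega

lemma stand_surj {f : Fin n → Fin m} (hf : Function.Surjective f) :
    Function.Surjective (fun i => rkF f hf (f i)) :=
  (rkF_bij hf).2.comp hf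

end Rank

section Std
variable {n m : ℕ}

lemma fO_step {q : Fin n → Fin m} (hq : IsStandard q) (hs : Function.Surjective q)
    {v w : Fin m} (hw : 0 < w.val) (hv : v.val = w.val - 1) : fO q hs v < fO q hs w := by
  have hqi : q (fO q hs w) = w := fO_map hs w
  obtain ⟨j, hj, hj'⟩ := hq (fO q hs w) (by rw [hqi]; exact hw)
  have : v = q j := by apply Fin.ext; rw [hj', hqi, hv]
  exact lt_of_le_of_lt (fO_le hs this.symm) hj

lemma fO_mono {q : Fin n → Fin m} (hq : IsStandard q) (hs : Function.Surjective q)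
    {v w : Fin m} (hvw : v < w) : fO q hs v < fO q hs w := by
  obtain ⟨k, hk⟩ : ∃ k, w.val = v.val + k + 1 := ⟨w.val - v.val - 1, by
    have := (Fin.lt_iff_val_lt_val.mp hvw); omega⟩
  induction k generalizing w with
  | zero => exact fO_step hq hs (by omega) (by omega)
  | succ k ih =>
    have hm : w.val - 1 < m := by have := w.isLt; omega
    have h1 : fO q hs v < fO q hs ⟨w.val - 1, hm⟩ :=
      ih (by rw [Fin.lt_iff_val_lt_val]; simp; omega) (by simp; omega)
    exact h1.trans (fO_step hq hs (by omega) (by simp))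

lemma fO_lt_iff {q : Fin n → Fin m} (hq : IsStandard q) (hs : Function.Surjective q)
    {v w : Fin m} : fO q hs v < fO q hs w ↔ v < w := by
  constructor
  · intro h
    rcases lt_trichotomy v w with h' | h' | h'
    · exact h'
    · exact absurd (h' ▸ h) (lt_irrefl _)
    · exact absurd (fO_mono hq hs h') (by omega)
  · exact fO_mono hq hs

lemma rk_std {q : Fin n → Fin m} (hq : IsStandard q) (hs : Function.Surjective q)
    (v : Fin m) : rk q hs v = v.val := by
  unfold rk
  have : (univ.filter (fun w => fO q hs w < fO q hs v)) = Finset.Iio v := by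
    ext w
    simp [fO_lt_iff hq hs, Finset.mem_Iio]
  rw [this]
  exact Fin.card_Iio v

lemma rkF_std {q : Fin n → Fin m} (hq : IsStandard q) (hs : Function.Surjective q)
    (v : Fin m) : rkF q hs v = v := Fin.ext (rk_std hq hs v)

lemma fO_comp {q : Fin n → Fin m} (σ : Equiv.Perm (Fin m)) (hs : Function.Surjective q)
    (hs' : Function.Surjective (fun i => σ (q i))) (v : Fin m) :
    fO (fun i => σ (q i)) hs' (σ v) = fO q hs v := by
  unfold fO
  congr 1
  ext j
  simp [σ.injective.eq_iff]

lemma rk_comp {q : Fin n → Fin m} (σ : Equiv.Perm (Fin m)) (hs : Function.Surjective q)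
    (hs' : Function.Surjective (fun i => σ (q i))) (v : Fin m) :
    rk (fun i => σ (q i)) hs' (σ v) = rk q hs v := by
  unfold rk
  apply Finset.card_bij' (fun w _ => σ.symm w) (fun w _ => σ w)
  · intro w hw
    simp only [mem_filter, mem_univ, true_and] at hw ⊢
    rw [fO_comp σ hs hs' v, ← Equiv.apply_symm_apply σ w, fO_comp σ hs hs'] at hw
    exact hw
  · intro w hw
    simp only [mem_filter, mem_univ, true_and] at hw ⊢
    rw [fO_comp σ hs hs' v, fO_comp σ hs hs' w]
    exact hw
  · intro w _; simp
  · intro w _; simp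

lemma rkF_comp {q : Fin n → Fin m} (hq : IsStandard q) (σ : Equiv.Perm (Fin m))
    (hs : Function.Surjective q) (hs' : Function.Surjective (fun i => σ (q i))) (u : Fin m) :
    rkF (fun i => σ (q i)) hs' u = σ.symm u := by
  apply Fin.ext
  show rk (fun i => σ (q i)) hs' u = (σ.symm u).val
  rw [← Equiv.apply_symm_apply σ u, rk_comp σ hs hs', rk_std hq hs]
  simp

noncomputable def surjEquiv (n m : ℕ) :
    {f : Fin n → Fin m // Function.Surjective f} ≃
      {q : Fin n → Fin m // IsStandard q ∧ Function.Surjective q} × Equiv.Perm (Fin m) where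
  toFun f := (⟨fun i => rkF f.1 f.2 (f.1 i), stand_std f.2, stand_surj f.2⟩,
    (permOf f.1 f.2).symm)
  invFun qσ := ⟨fun i => qσ.2 (qσ.1.1 i), qσ.2.surjective.comp qσ.1.2.2⟩
  left_inv f := by
    apply Subtype.ext; funext i
    show (permOf f.1 f.2).symm (permOf f.1 f.2 (f.1 i)) = f.1 i
    exact Equiv.symm_apply_apply _ _
  right_inv := by
    rintro ⟨⟨q, hq, hsq⟩, σ⟩
    have hs' : Function.Surjective (fun i => σ (q i)) := σ.surjective.comp hsq
    have hperm : permOf (fun i => σ (q i)) hs' = σ.symm := by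
      apply Equiv.ext
      intro u
      exact rkF_comp hq σ hsq hs' u
    refine Prod.ext ?_ ?_
    · apply Subtype.ext; funext i
      show rkF (fun i => σ (q i)) hs' (σ (q i)) = q i
      rw [rkF_comp hq σ hsq hs' (σ (q i))]
      simp
    · show (permOf (fun i => σ (q i)) hs').symm = σ
      rw [hperm, Equiv.symm_symm]

lemma card_surj_eq (n m : ℕ) :
    Nat.card {f : Fin n → Fin m // Function.Surjective f} =
      Nat.card {q : Fin n → Fin m // IsStandard q ∧ Function.Surjective q} * m.factorial := by
  rw [Nat.card_congr (surjEquiv n m), Nat.card_prod]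
  congr 1
  rw [Nat.card_eq_fintype_card, Fintype.card_perm, Fintype.card_fin]

end Std

section IE
variable {n m : ℕ}

lemma piFinset_eq_filter (S : Finset (Fin m)) :
    Fintype.piFinset (fun _ : Fin n => S) =
      univ.filter (fun f : Fin n → Fin m => ∀ i, f i ∈ S) := by
  ext f
  simp [Fintype.mem_piFinset]

lemma card_in_S (S : Finset (Fin m)) :
    ((S.card : ℚ) ^ n) = (univ.filter (fun f : Fin n → Fin m => ∀ i, f i ∈ S)).card := by
  rw [← piFinset_eq_filter, Fintype.card_piFinset]
  push_cast
  simp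

lemma inner_ie (f : Fin n → Fin m) :
    (∑ S ∈ (univ : Finset (Fin m)).powerset,
        if ∀ i, f i ∈ S then ((-1 : ℚ) ^ (m - S.card)) else 0) =
      if Function.Surjective f then 1 else 0 := by
  classical
  set A : Finset (Fin m) := univ.image f with hA
  have hsub : ∀ S : Finset (Fin m), (∀ i, f i ∈ S) ↔ A ⊆ S := by
    intro S
    constructor
    · intro h v hv
      obtain ⟨i, _, rfl⟩ := Finset.mem_image.mp hv
      exact h i
    · intro h i
      exact h (Finset.mem_image.mpr ⟨i, mem_univ i, rfl⟩)
  have e : Finset (Fin m) ≃ Finset (Fin m) := ⟨compl, compl, compl_compl, compl_compl⟩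
  calc (∑ S ∈ (univ : Finset (Fin m)).powerset,
        if ∀ i, f i ∈ S then ((-1 : ℚ) ^ (m - S.card)) else 0)
      = ∑ T ∈ (univ : Finset (Fin m)).powerset,
          (if T ⊆ Aᶜ then ((-1 : ℚ) ^ T.card) else 0) := by
        refine Finset.sum_equiv ⟨compl, compl, compl_compl, compl_compl⟩
          (fun S => by simp) (fun S _ => ?_)
        have h1 : (∀ i, f i ∈ S) ↔ Sᶜ ⊆ Aᶜ := by
          rw [hsub, ← Finset.compl_subset_compl]
        have h2 : m - S.card = (Sᶜ : Finset (Fin m)).card := by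
          rw [Finset.card_compl]
          simp
        simp only [Equiv.coe_fn_mk, h1, h2]
    _ = ∑ T ∈ (Aᶜ : Finset (Fin m)).powerset, ((-1 : ℚ) ^ T.card) := by
        rw [← Finset.sum_filter]
        congr 1
        ext T
        simp [Finset.mem_powerset]
    _ = if Function.Surjective f then 1 else 0 := by
        have := Finset.sum_powerset_neg_one_pow_card (x := (Aᶜ : Finset (Fin m)))
        have hcast : (∑ T ∈ (Aᶜ : Finset (Fin m)).powerset, ((-1 : ℚ) ^ T.card)) =
            ((∑ T ∈ (Aᶜ : Finset (Fin m)).powerset, ((-1 : ℤ) ^ T.card) : ℤ) : ℚ) := by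
          push_cast
          rfl
        rw [hcast, this]
        have hiff : (Aᶜ : Finset (Fin m)) = ∅ ↔ Function.Surjective f := by
          rw [Finset.compl_eq_empty_iff, hA]
          constructor
          · intro h v
            have : v ∈ (univ : Finset (Fin n)).image f := h ▸ mem_univ v
            obtain ⟨i, _, hi⟩ := Finset.mem_image.mp this
            exact ⟨i, hi⟩
          · intro h
            apply Finset.eq_univ_of_forall
            intro v
            obtain ⟨i, hi⟩ := h v
            exact Finset.mem_image.mpr ⟨i, mem_univ i, hi⟩
        by_cases hs : Function.Surjective f <;> simp [hiff, hs]

end IE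

lemma card_surj_formula (n m : ℕ) :
    (Nat.card {f : Fin n → Fin m // Function.Surjective f} : ℚ) =
      ∑ i ∈ Finset.range (m + 1),
        (-1 : ℚ) ^ i * (m.choose i : ℚ) * ((m - i : ℕ) : ℚ) ^ n := by
  classical
  have h0 : Nat.card {f : Fin n → Fin m // Function.Surjective f} =
      (univ.filter (fun f : Fin n → Fin m => Function.Surjective f)).card := by
    rw [Nat.card_eq_fintype_card, Fintype.card_subtype]
  rw [h0]
  have h1 : ((univ.filter (fun f : Fin n → Fin m => Function.Surjective f)).card : ℚ) =
      ∑ f ∈ (univ : Finset (Fin n → Fin m)),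
        if Function.Surjective f then (1 : ℚ) else 0 := by
    rw [Finset.sum_boole]
  rw [h1]
  have h2 : ∀ f : Fin n → Fin m, (if Function.Surjective f then (1 : ℚ) else 0) =
      ∑ S ∈ (univ : Finset (Fin m)).powerset,
        if ∀ i, f i ∈ S then ((-1 : ℚ) ^ (m - S.card)) else 0 :=
    fun f => (inner_ie f).symm
  rw [Finset.sum_congr rfl (fun f _ => h2 f), Finset.sum_comm]
  have h3 : ∀ S : Finset (Fin m),
      (∑ f ∈ (univ : Finset (Fin n → Fin m)),
        if ∀ i, f i ∈ S then ((-1 : ℚ) ^ (m - S.card)) else 0) =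
      (-1 : ℚ) ^ (m - S.card) * (S.card : ℚ) ^ n := by
    intro S
    rw [← Finset.sum_filter, Finset.sum_const, card_in_S]
    ring
  rw [Finset.sum_congr rfl (fun S _ => h3 S)]
  have h4 : (∑ S ∈ (univ : Finset (Fin m)).powerset,
      (-1 : ℚ) ^ (m - S.card) * (S.card : ℚ) ^ n) =
      ∑ k ∈ Finset.range (m + 1),
        (m.choose k) • ((-1 : ℚ) ^ (m - k) * (k : ℚ) ^ n) := by
    have := Finset.sum_powerset_apply_card
      (fun k => (-1 : ℚ) ^ (m - k) * (k : ℚ) ^ n) (x := (univ : Finset (Fin m)))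
    simpa using this
  rw [h4, ← Finset.sum_range_reflect]
  apply Finset.sum_congr rfl
  intro i hi
  have hi' : i ≤ m := by
    have := Finset.mem_range.mp hi; omega
  have e1 : m + 1 - 1 - i = m - i := by omega
  have e2 : m - (m - i) = i := by omega
  rw [e1, e2]
  rw [Nat.choose_symm hi']
  ring

/-- The number of length-`n` level-`ℓ` sequences in standard order is
`Σ_{m=1}^{ℓ} Σ_{i=0}^{m} ((−1)^i/i!)·((m−i)^n/(m−i)!)`. -/
theorem card_standard_sequences (n ℓ : ℕ) (hn : 1 ≤ n) (hℓ : 1 ≤ ℓ) :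
    (Nat.card {q : Fin n → Fin ℓ // IsStandard q} : ℚ) =
      ∑ m ∈ Finset.Icc 1 ℓ, ∑ i ∈ Finset.range (m + 1),
        ((-1 : ℚ) ^ i / (Nat.factorial i : ℚ)) *
          (((m - i : ℕ) : ℚ) ^ n / (Nat.factorial (m - i) : ℚ)) := by
  classical
  rw [card_sum_surj hn ℓ, Nat.cast_sum]
  apply Finset.sum_congr rfl
  intro m _
  have hfact : (m.factorial : ℚ) ≠ 0 := by
    exact_mod_cast Nat.factorial_ne_zero m
  have h1 : ((Nat.card {q : Fin n → Fin m // IsStandard q ∧ Function.Surjective q}) : ℚ) =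
      (Nat.card {f : Fin n → Fin m // Function.Surjective f} : ℚ) / (m.factorial : ℚ) := by
    rw [eq_div_iff hfact]
    exact_mod_cast congrArg (fun x : ℕ => (x : ℚ)) (card_surj_eq n m).symm
  rw [h1, card_surj_formula, Finset.sum_div]
  apply Finset.sum_congr rfl
  intro i hi
  have hi' : i ≤ m := by have := Finset.mem_range.mp hi; omega
  have hch : ((m.choose i : ℚ)) * (i.factorial : ℚ) * ((m - i).factorial : ℚ)
      = (m.factorial : ℚ) := by
    exact_mod_cast congrArg (fun x : ℕ => (x : ℚ))
      (Nat.choose_mul_factorial_mul_factorial hi')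
  have hif : (i.factorial : ℚ) ≠ 0 := by exact_mod_cast Nat.factorial_ne_zero i
  have hmif : ((m - i).factorial : ℚ) ≠ 0 := by exact_mod_cast Nat.factorial_ne_zero (m - i)
  field_simp
  rw [Nat.cast_sub hi']
  linear_combination (((m : ℚ) - (i : ℚ)) ^ n) * hch
end

section
/- The generalized Hamming distance on pairs of length-n level-ℓ sequence patterns is a metric: for all t_1, t_2, t_3 in T_{n,ℓ}, d(t_1,t_2) = 0 if and only if t_1 = t_2; d(t_1,t_2) = d(t_2,t_1); and d(t_1,t_3) + d(t_2,t_3) ≥ d(t_1,t_2). -/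
/-- The generalized Hamming distance between two sequence patterns: the minimum Hamming
distance over all pairs of representatives. -/
noncomputable def patternDist {n ℓ : ℕ} (t₁ t₂ : SeqPattern n ℓ) : ℕ :=
  sInf {d | ∃ q p : Fin n → Fin ℓ,
    Quotient.mk (seqSetoid n ℓ) q = t₁ ∧ Quotient.mk (seqSetoid n ℓ) p = t₂ ∧
      hammingDist q p = d}

lemma patternSet_nonempty {n ℓ : ℕ} (t₁ t₂ : SeqPattern n ℓ) :
    {d | ∃ q p : Fin n → Fin ℓ,
      Quotient.mk (seqSetoid n ℓ) q = t₁ ∧ Quotient.mk (seqSetoid n ℓ) p = t₂ ∧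
        hammingDist q p = d}.Nonempty := by
  obtain ⟨q, rfl⟩ := t₁.exists_rep
  obtain ⟨p, rfl⟩ := t₂.exists_rep
  exact ⟨hammingDist q p, q, p, rfl, rfl, rfl⟩

lemma hammingDist_perm_comp {n ℓ : ℕ} (φ : Equiv.Perm (Fin ℓ)) (q p : Fin n → Fin ℓ) :
    hammingDist (⇑φ ∘ q) (⇑φ ∘ p) = hammingDist q p :=
  hammingDist_comp (fun _ => ⇑φ) (fun _ => φ.injective)

/-- The generalized Hamming distance of sequence patterns is a metric: it vanishes exactly
on equal patterns, is symmetric, and satisfies the triangle inequality. -/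
theorem patternDist_is_metric (n ℓ : ℕ) :
    (∀ t₁ t₂ : SeqPattern n ℓ, patternDist t₁ t₂ = 0 ↔ t₁ = t₂) ∧
      (∀ t₁ t₂ : SeqPattern n ℓ, patternDist t₁ t₂ = patternDist t₂ t₁) ∧
      (∀ t₁ t₂ t₃ : SeqPattern n ℓ,
        patternDist t₁ t₂ ≤ patternDist t₁ t₃ + patternDist t₂ t₃) := by
  refine ⟨?_, ?_, ?_⟩
  · intro t₁ t₂
    constructor
    · intro h
      have hmem := Nat.sInf_mem (patternSet_nonempty t₁ t₂)
      rw [patternDist] at h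
      rw [h] at hmem
      obtain ⟨q, p, hq, hp, hd⟩ := hmem
      have : q = p := hammingDist_eq_zero.mp hd
      rw [← hq, ← hp, this]
    · rintro rfl
      obtain ⟨q, rfl⟩ := t₁.exists_rep
      refine Nat.eq_zero_of_le_zero (Nat.sInf_le ⟨q, q, rfl, rfl, hammingDist_self q⟩)
  · intro t₁ t₂
    unfold patternDist
    congr 1
    ext d
    constructor
    · rintro ⟨q, p, hq, hp, hd⟩
      exact ⟨p, q, hp, hq, by rw [hammingDist_comm]; exact hd⟩
    · rintro ⟨q, p, hq, hp, hd⟩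
      exact ⟨p, q, hp, hq, by rw [hammingDist_comm]; exact hd⟩
  · intro t₁ t₂ t₃
    obtain ⟨q₁, r₁, hq₁, hr₁, hd₁⟩ := Nat.sInf_mem (patternSet_nonempty t₁ t₃)
    obtain ⟨q₂, r₂, hq₂, hr₂, hd₂⟩ := Nat.sInf_mem (patternSet_nonempty t₂ t₃)
    have hrr : (seqSetoid n ℓ).r r₁ r₂ := Quotient.exact (hr₁.trans hr₂.symm)
    obtain ⟨φ, hφ⟩ := hrr
    have hq₁' : Quotient.mk (seqSetoid n ℓ) (⇑φ ∘ q₁) = t₁ := by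
      rw [← hq₁]; exact Quotient.sound ⟨φ.symm, by funext i; simp⟩
    have key : patternDist t₁ t₂ ≤ hammingDist (⇑φ ∘ q₁) q₂ :=
      Nat.sInf_le ⟨⇑φ ∘ q₁, q₂, hq₁', hq₂, rfl⟩
    calc patternDist t₁ t₂ ≤ hammingDist (⇑φ ∘ q₁) q₂ := key
      _ ≤ hammingDist (⇑φ ∘ q₁) r₂ + hammingDist r₂ q₂ := hammingDist_triangle _ _ _
      _ = hammingDist (⇑φ ∘ q₁) (⇑φ ∘ r₁) + hammingDist q₂ r₂ := by
          rw [hφ, hammingDist_comm r₂]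
      _ = patternDist t₁ t₃ + patternDist t₂ t₃ := by
          rw [hammingDist_perm_comp, hd₁, hd₂, patternDist, patternDist]
end

section
/- Let n ≥ 1, ℓ ≥ 1, k ≥ 2, and let Q = (q_1,…,q_k) be a k-tuple of length-n level-ℓ sequences. Then the Hamming distance of the k-tuple of patterns (⟦q_1⟧,…,⟦q_k⟧) equals n − 1 if and only if no two cross sections of Q at distinct indices are connected. -/
/-- The Hamming distance of a \`k\`-tuple of sequences: the number of indices at which
the values of the sequences are not all equal. -/
noncomputable def tupleDist {n ℓ k : ℕ} (Q : Fin k → Fin n → Fin ℓ) : ℕ :=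
  Nat.card {i : Fin n // ¬ ∀ j j' : Fin k, Q j i = Q j' i}

/-- The Hamming distance of a \`k\`-tuple of sequence patterns: the minimum of the tuple
Hamming distance over all tuples of representatives. -/
noncomputable def patternTupleDist {n ℓ k : ℕ} (T : Fin k → SeqPattern n ℓ) : ℕ :=
  sInf {d | ∃ Q : Fin k → Fin n → Fin ℓ,
    (∀ j, Quotient.mk (seqSetoid n ℓ) (Q j) = T j) ∧ tupleDist Q = d}

/-- The cross section of a \`k\`-tuple of sequences at index \`i\`. -/
def crossSection {n ℓ k : ℕ} (Q : Fin k → Fin n → Fin ℓ) (i : Fin n) : Fin k → Fin ℓ :=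
  fun j => Q j i

/-- Two tuples in \`(Fin ℓ)^k\` are incompatible if they differ in every coordinate. -/
def Incompatible {k ℓ : ℕ} (c c' : Fin k → Fin ℓ) : Prop :=
  ∀ j, c j ≠ c' j

/-- Two tuples in \`(Fin ℓ)^k\` are connected if they are identical or incompatible. -/
def Connected {k ℓ : ℕ} (c c' : Fin k → Fin ℓ) : Prop :=
  c = c' ∨ Incompatible c c'

/-- A tuple in \`(Fin ℓ)^k\` is constant if all its coordinates are equal. -/
def IsConstant {k ℓ : ℕ} (c : Fin k → Fin ℓ) : Prop :=
  ∀ j j' , c j = c j'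

open Finset in
lemma tupleDist_eq_sub {n ℓ k : ℕ} (Q : Fin k → Fin n → Fin ℓ) :
    tupleDist Q =
      n - (Finset.univ.filter (fun i : Fin n => ∀ j j' : Fin k, Q j i = Q j' i)).card := by
  classical
  unfold tupleDist
  rw [Nat.card_eq_fintype_card, Fintype.card_subtype]
  have h := Finset.card_filter_add_card_filter_not
    (s := (Finset.univ : Finset (Fin n))) (p := fun i : Fin n => ∀ j j' : Fin k, Q j i = Q j' i)
  simp only [Finset.card_univ, Fintype.card_fin] at h
  omega

lemma exists_perm_map₂ {ℓ : ℕ} {a b z o : Fin ℓ} (hab : a ≠ b) (hzo : z ≠ o) :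
    ∃ σ : Equiv.Perm (Fin ℓ), σ a = z ∧ σ b = o := by
  refine ⟨(Equiv.swap a z).trans (Equiv.swap ((Equiv.swap a z) b) o), ?_, ?_⟩
  · simp only [Equiv.trans_apply, Equiv.swap_apply_left]
    rw [Equiv.swap_apply_of_ne_of_ne _ hzo]
    intro h
    apply hab
    have : (Equiv.swap a z) b = (Equiv.swap a z) a := by
      rw [Equiv.swap_apply_left]; exact h.symm
    exact ((Equiv.swap a z).injective this).symm
  · simp only [Equiv.trans_apply, Equiv.swap_apply_left]

/-- The Hamming distance of the `k`-tuple of patterns generated by `Q` equals `n - 1`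
if and only if no two cross sections of `Q` at distinct indices are connected. -/
theorem patternTupleDist_eq_pred_iff (n ℓ k : ℕ) (hn : 1 ≤ n) (hℓ : 1 ≤ ℓ) (hk : 2 ≤ k)
    (Q : Fin k → Fin n → Fin ℓ) :
    patternTupleDist (fun j => Quotient.mk (seqSetoid n ℓ) (Q j)) = n - 1 ↔
      ∀ i i' : Fin n, i ≠ i' → ¬ Connected (crossSection Q i) (crossSection Q i') := by
  classical
  set S : Set ℕ := {d | ∃ Q' : Fin k → Fin n → Fin ℓ,
    (∀ j, Quotient.mk (seqSetoid n ℓ) (Q' j) =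
      (fun j => Quotient.mk (seqSetoid n ℓ) (Q j)) j) ∧ tupleDist Q' = d} with hS
  have hgoal : patternTupleDist (fun j => Quotient.mk (seqSetoid n ℓ) (Q j)) = sInf S := rfl
  rw [hgoal]
  -- membership lemma: relabelings give elements of S
  have hmem : ∀ φ : Fin k → Equiv.Perm (Fin ℓ),
      tupleDist (fun j i => φ j (Q j i)) ∈ S := by
    intro φ
    refine ⟨fun j i => φ j (Q j i), fun j => ?_, rfl⟩
    exact Quotient.sound ⟨(φ j).symm, by funext i; simp⟩
  have j₀ : Fin k := ⟨0, by omega⟩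
  constructor
  · -- forward direction, by contradiction
    intro h i i' hii hconn
    have hn2 : 2 ≤ n := by
      have h1 := i.isLt; have h2 := i'.isLt
      have : i.val ≠ i'.val := fun hv => hii (Fin.ext hv)
      omega
    -- construct permutations making both cross sections constant
    have hperm : ∃ φ : Fin k → Equiv.Perm (Fin ℓ),
        (∀ j j' : Fin k, φ j (Q j i) = φ j' (Q j' i)) ∧
        (∀ j j' : Fin k, φ j (Q j i') = φ j' (Q j' i')) := by
      rcases hconn with hid | hinc
      · -- identical cross sections
        have heq : ∀ j, Q j i = Q j i' := fun j => congrFun hid j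
        have z : Fin ℓ := ⟨0, by omega⟩
        refine ⟨fun j => Equiv.swap (Q j i) z, ?_, ?_⟩
        · intro j j'; simp [Equiv.swap_apply_left]
        · intro j j'; simp [← heq, Equiv.swap_apply_left]
      · -- incompatible cross sections
        have hℓ2 : 2 ≤ ℓ := by
          have hv : (Q j₀ i).val ≠ (Q j₀ i').val := fun hv => hinc j₀ (Fin.ext hv)
          have := (Q j₀ i).isLt; have := (Q j₀ i').isLt
          omega
        have z : Fin ℓ := ⟨0, by omega⟩
        have o : Fin ℓ := ⟨1, by omega⟩
        have hzo : (⟨0, by omega⟩ : Fin ℓ) ≠ ⟨1, by omega⟩ := by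
          intro hc; simpa using congrArg Fin.val hc
        have hσ : ∀ j : Fin k, ∃ σ : Equiv.Perm (Fin ℓ),
            σ (Q j i) = ⟨0, by omega⟩ ∧ σ (Q j i') = ⟨1, by omega⟩ :=
          fun j => exists_perm_map₂ (hinc j) hzo
        choose σ hσ1 hσ2 using hσ
        exact ⟨σ, fun j j' => by rw [hσ1, hσ1], fun j j' => by rw [hσ2, hσ2]⟩
    obtain ⟨φ, hci, hci'⟩ := hperm
    set Q' : Fin k → Fin n → Fin ℓ := fun j i => φ j (Q j i) with hQ'
    have hsub : ({i, i'} : Finset (Fin n)) ⊆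
        Finset.univ.filter (fun x : Fin n => ∀ j j' : Fin k, Q' j x = Q' j' x) := by
      intro x hx
      simp only [Finset.mem_insert, Finset.mem_singleton] at hx
      rcases hx with rfl | rfl
      · exact Finset.mem_filter.mpr ⟨Finset.mem_univ _, hci⟩
      · exact Finset.mem_filter.mpr ⟨Finset.mem_univ _, hci'⟩
    have hcard : 2 ≤ (Finset.univ.filter
        (fun x : Fin n => ∀ j j' : Fin k, Q' j x = Q' j' x)).card := by
      have := Finset.card_le_card hsub
      rwa [Finset.card_insert_of_notMem (by simpa using hii), Finset.card_singleton] at this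
    have hle : tupleDist Q' ≤ n - 2 := by
      rw [tupleDist_eq_sub]; omega
    have hsle := Nat.sInf_le (hmem φ)
    have heq : tupleDist (fun j i => φ j (Q j i)) = tupleDist Q' := rfl
    rw [heq] at hsle
    omega
  · -- backward direction
    intro hconn
    -- lower bound: every element of S is ≥ n - 1
    have hlb : ∀ d ∈ S, n - 1 ≤ d := by
      rintro d ⟨Q', hQ', rfl⟩
      have hψ : ∀ j, ∃ ψ : Equiv.Perm (Fin ℓ), ⇑ψ ∘ Q' j = Q j :=
        fun j => Quotient.exact (hQ' j)
      choose ψ hψ using hψ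
      have hQeq : ∀ j x, Q j x = ψ j (Q' j x) := by
        intro j x; rw [← hψ j]; rfl
      have hcard : (Finset.univ.filter
          (fun x : Fin n => ∀ j j' : Fin k, Q' j x = Q' j' x)).card ≤ 1 := by
        apply Finset.card_le_one.mpr
        intro i hi i' hi' 
        by_contra hii
        have hci : ∀ j j' : Fin k, Q' j i = Q' j' i := (Finset.mem_filter.mp hi).2
        have hci' : ∀ j j' : Fin k, Q' j i' = Q' j' i' := (Finset.mem_filter.mp hi').2
        apply hconn i i' hii
        by_cases hab : Q' j₀ i = Q' j₀ i'
        · left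
          funext j
          show Q j i = Q j i'
          rw [hQeq, hQeq]
          congr 1
          calc Q' j i = Q' j₀ i := hci j j₀
            _ = Q' j₀ i' := hab
            _ = Q' j i' := hci' j₀ j
        · right
          intro j hc
          apply hab
          have hc' : Q j i = Q j i' := hc
          have he : Q' j i = Q' j i' :=
            (ψ j).injective (by rw [← hQeq, ← hQeq]; exact hc')
          calc Q' j₀ i = Q' j i := hci j₀ j
            _ = Q' j i' := he
            _ = Q' j₀ i' := hci' j j₀
      rw [tupleDist_eq_sub]
      omega
    -- upper bound: construct a representative achieving n - 1
    have i₀ : Fin n := ⟨0, by omega⟩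
    set φ : Fin k → Equiv.Perm (Fin ℓ) :=
      fun j => Equiv.swap (Q j i₀) ⟨0, by omega⟩ with hφ
    set Q' : Fin k → Fin n → Fin ℓ := fun j i => φ j (Q j i) with hQ'
    have hone : 1 ≤ (Finset.univ.filter
        (fun x : Fin n => ∀ j j' : Fin k, Q' j x = Q' j' x)).card := by
      apply Finset.card_pos.mpr
      refine ⟨i₀, Finset.mem_filter.mpr ⟨Finset.mem_univ _, ?_⟩⟩
      intro j j'
      show φ j (Q j i₀) = φ j' (Q j' i₀)
      simp [hφ, Equiv.swap_apply_left]
    have hub : tupleDist Q' ≤ n - 1 := by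
      rw [tupleDist_eq_sub]; omega
    have hmem' := hmem φ
    have heq : tupleDist (fun j i => φ j (Q j i)) = tupleDist Q' := rfl
    rw [heq] at hmem'
    have := hlb _ hmem'
    exact le_antisymm (le_trans (Nat.sInf_le hmem') (by omega))
      (le_csInf ⟨_, hmem'⟩ hlb)
end

section
/- Let Q = (q_1,…,q_k) be a k-tuple of length-n level-ℓ sequences, and let I ⊆ Fin n be a set of indices such that the cross sections of Q at the indices in I are pairwise connected. Then there exists a k-tuple Φ = (φ_1,…,φ_k) of permutations of Fin ℓ such that for every i ∈ I, the cross section of Φ(Q) = (φ_1 ∘ q_1,…,φ_k ∘ q_k) at index i is constant. -/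
/-- Extend an injective map defined on a subset of a fintype to a permutation. -/
lemma exists_perm_of_injOn {ℓ : ℕ} (s : Set (Fin ℓ)) (f : s → Fin ℓ)
    (hf : Function.Injective f) :
    ∃ σ : Equiv.Perm (Fin ℓ), ∀ x : s, σ x = f x := by
  classical
  let e₀ : s ≃ (Set.range f : Set (Fin ℓ)) := Equiv.ofInjective f hf
  have hcard : Fintype.card ((sᶜ : Set (Fin ℓ))) =
      Fintype.card (((Set.range f)ᶜ : Set (Fin ℓ))) := by
    have h1 : Fintype.card s = Fintype.card (Set.range f : Set (Fin ℓ)) :=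
      Fintype.card_congr e₀
    rw [Fintype.card_compl_set, Fintype.card_compl_set, Fintype.card_fin, h1]
  have e₁ : ((sᶜ : Set (Fin ℓ))) ≃ (((Set.range f)ᶜ : Set (Fin ℓ))) :=
    Fintype.equivOfCardEq hcard
  obtain ⟨e, he⟩ := (Equiv.Set.compl e₀).symm e₁
  refine ⟨e, fun x => ?_⟩
  rw [he x]
  simp [e₀]

/-- If the cross sections of `Q` at the indices of a set `I` are pairwise connected, then
some tuple of permutations maps all of them to constant cross sections. -/
theorem exists_perms_constant_of_pairwise_connected (n ℓ k : ℕ)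
    (Q : Fin k → Fin n → Fin ℓ) (I : Set (Fin n))
    (hI : ∀ i ∈ I, ∀ i' ∈ I, Connected (crossSection Q i) (crossSection Q i')) :
    ∃ Φ : Fin k → Equiv.Perm (Fin ℓ),
      ∀ i ∈ I, IsConstant (crossSection (fun j => ⇑(Φ j) ∘ Q j) i) := by
  classical
  rcases Nat.eq_zero_or_pos k with hk | hk
  · subst hk
    exact ⟨fun _ => 1, fun i _ j => j.elim0⟩
  set j0 : Fin k := ⟨0, hk⟩
  -- key: if Q j i = Q j i' for i,i' ∈ I then cross sections are equal
  have key : ∀ i ∈ I, ∀ i' ∈ I, ∀ j, Q j i = Q j i' → ∀ j', Q j' i = Q j' i' := by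
    intro i hi i' hi' j hj j'
    rcases hI i hi i' hi' with h | h
    · exact congrFun h j'
    · exact absurd hj (h j)
  -- for each j, build the permutation
  have hperm : ∀ j : Fin k, ∃ σ : Equiv.Perm (Fin ℓ),
      ∀ i ∈ I, σ (Q j i) = Q j0 i := by
    intro j
    set s : Set (Fin ℓ) := {x | ∃ i ∈ I, Q j i = x} with hs
    have choose_spec : ∀ x : s, ∃ i ∈ I, Q j i = (x : Fin ℓ) := fun x => x.2
    set f : s → Fin ℓ := fun x => Q j0 (choose_spec x).choose with hfdef
    have hfspec : ∀ x : s, (choose_spec x).choose ∈ I ∧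
        Q j ((choose_spec x).choose) = (x : Fin ℓ) := fun x => by
      obtain ⟨h1, h2⟩ := (choose_spec x).choose_spec; exact ⟨h1, h2⟩
    have hfval : ∀ i, ∀ hi : i ∈ I, f ⟨Q j i, ⟨i, hi, rfl⟩⟩ = Q j0 i := by
      intro i hi
      set x : s := ⟨Q j i, ⟨i, hi, rfl⟩⟩
      obtain ⟨h1, h2⟩ := hfspec x
      exact (key _ h1 i hi j h2 j0)
    have hinj : Function.Injective f := by
      intro x y hxy
      obtain ⟨hx1, hx2⟩ := hfspec x
      obtain ⟨hy1, hy2⟩ := hfspec y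
      have := key _ hx1 _ hy1 j0 hxy j
      apply Subtype.ext
      rw [← hx2, ← hy2, this]
    obtain ⟨σ, hσ⟩ := exists_perm_of_injOn s f hinj
    refine ⟨σ, fun i hi => ?_⟩
    have := hσ ⟨Q j i, ⟨i, hi, rfl⟩⟩
    rw [this, hfval i hi]
  choose Φ hΦ using hperm
  refine ⟨Φ, fun i hi j j' => ?_⟩
  show Φ j (Q j i) = Φ j' (Q j' i)
  rw [hΦ j i hi, hΦ j' i hi]
end

section
/- Let ℓ ≥ 1 and k ≥ 2, and set n = ℓ^{k−1}. Define the k-tuple M = (q_1,…,q_k) of length-n level-ℓ sequences by q_1(i) = 0 for all i, and for 2 ≤ j ≤ k, q_j(i) = (⌊i / ℓ^{k−j}⌋) mod ℓ (so that the cross sections of M are exactly the ℓ^{k−1} tuples in (Fin ℓ)^k with first coordinate 0, listed in lexicographic order). Then M is complete: for every k-tuple Φ = (φ_1,…,φ_k) of permutations of Fin ℓ, Φ(M) = (φ_1 ∘ q_1,…,φ_k ∘ q_k) has exactly one constant cross section. -/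
/-!
Since `q₁ ≡ 0`, a cross section of `Φ(M)` can only be constant with value `φ₁ 0`, so the constant
cross sections of `Φ(M)` are the indices `i` whose cross section in `M` is the single tuple
`(φ_j⁻¹ (φ₁ 0))_j`. That tuple has first coordinate `0`, and the cross sections of `M` run
through every such tuple exactly once, because `i ↦ (⌊i / ℓ^m⌋ mod ℓ)_{m < k-1}` is the base-`ℓ`
digit bijection `Fin (ℓ^(k-1)) ≃ (Fin (k-1) → Fin ℓ)`.
-/

theorem isConstant_apply_iff {k ℓ : ℕ} (Φ : Fin k → Equiv.Perm (Fin ℓ)) (c : Fin k → Fin ℓ)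
    (j₀ : Fin k) :
    IsConstant (fun j => Φ j (c j)) ↔ c = fun j => (Φ j).symm (Φ j₀ (c j₀)) := by
  constructor
  · intro h
    funext j
    exact (Equiv.eq_symm_apply _).mpr (h j j₀)
  · intro h j j'
    rw [h]
    simp only [Equiv.apply_symm_apply]

namespace LexTuple

variable {ℓ k : ℕ} [NeZero ℓ] [NeZero k] {M : Fin k → Fin (ℓ ^ (k - 1)) → Fin ℓ}

theorem apply_zero_eq_zero
    (hM : ∀ (j : Fin k) (i : Fin (ℓ ^ (k - 1))), (M j i).val = (i.val / ℓ ^ (k - 1 - j.val)) % ℓ)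
    (i : Fin (ℓ ^ (k - 1))) : M 0 i = 0 := by
  ext
  rw [hM, Fin.val_zero, Nat.sub_zero, Nat.div_eq_of_lt i.isLt, Nat.zero_mod, Fin.val_zero]

theorem crossSection_eq_iff
    (hM : ∀ (j : Fin k) (i : Fin (ℓ ^ (k - 1))), (M j i).val = (i.val / ℓ ^ (k - 1 - j.val)) % ℓ)
    (i : Fin (ℓ ^ (k - 1))) {c : Fin k → Fin ℓ} (hc : c 0 = 0) :
    crossSection M i = c ↔
      finFunctionFinEquiv.symm i = fun m : Fin (k - 1) => c ⟨k - 1 - m, by omega⟩ := by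
  constructor
  · rintro rfl
    funext m
    ext
    rw [finFunctionFinEquiv_symm_apply_val, crossSection, hM]
    congr 3
    simp only
    omega
  · intro h
    funext j
    by_cases hj : j = 0
    · rw [hj, crossSection, apply_zero_eq_zero hM, hc]
    · have hj : (j : ℕ) ≠ 0 := Fin.val_ne_iff.mpr hj
      have hdigit := congrArg (fun f => (f ⟨k - 1 - j, by omega⟩ : ℕ)) h
      simp only [finFunctionFinEquiv_symm_apply_val] at hdigit
      ext
      rw [crossSection, hM, hdigit]
      congr 3
      omega

theorem existsUnique_crossSection_eq
    (hM : ∀ (j : Fin k) (i : Fin (ℓ ^ (k - 1))), (M j i).val = (i.val / ℓ ^ (k - 1 - j.val)) % ℓ)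
    {c : Fin k → Fin ℓ} (hc : c 0 = 0) : ∃! i, crossSection M i = c := by
  simp_rw [crossSection_eq_iff hM _ hc]
  exact finFunctionFinEquiv.symm.bijective.existsUnique _

end LexTuple

/-- The tuple `M` of `k` sequences of length `ℓ^(k-1)` whose cross sections are exactly
the tuples of `(Fin ℓ)^k` with first coordinate `0` in lexicographic order is complete:
after applying any tuple of permutations, it has exactly one constant cross section. -/
theorem M_complete (ℓ k : ℕ) (hℓ : 1 ≤ ℓ) (hk : 2 ≤ k)
    (M : Fin k → Fin (ℓ ^ (k - 1)) → Fin ℓ)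
    (hM : ∀ (j : Fin k) (i : Fin (ℓ ^ (k - 1))),
      (M j i).val = (i.val / ℓ ^ (k - 1 - j.val)) % ℓ) :
    ∀ Φ : Fin k → Equiv.Perm (Fin ℓ),
      ∃! i : Fin (ℓ ^ (k - 1)), IsConstant (crossSection (fun j => ⇑(Φ j) ∘ M j) i) := by
  intro Φ
  have : NeZero ℓ := ⟨by omega⟩
  have : NeZero k := ⟨by omega⟩
  refine (existsUnique_congr fun i => ?_).mp
    (LexTuple.existsUnique_crossSection_eq hM (c := fun j => (Φ j).symm (Φ 0 0)) (by simp))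
  have hzero : crossSection M i 0 = 0 := LexTuple.apply_zero_eq_zero hM i
  exact (hzero ▸ isConstant_apply_iff Φ (crossSection M i) 0).symm
end

section
/- Let ℓ ≥ 1, k ≥ 2, and 1 ≤ r ≤ ℓ^{k−1}. Define the k-tuple M_r = (q_1,…,q_k) of length-r level-ℓ sequences by q_1(i) = 0 for all i, and for 2 ≤ j ≤ k, q_j(i) = (⌊i / ℓ^{k−j}⌋) mod ℓ, for i ∈ Fin r. Then M_r is semi-complete: for every k-tuple Φ of permutations of Fin ℓ, Φ(M_r) has at most one constant cross section; consequently, the Hamming distance of the k-tuple of patterns (⟦q_1⟧,…,⟦q_k⟧) equals r − 1. -/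
/-- Base-`ℓ` digits below position `m` determine a number `< ℓ ^ m`. -/
lemma digits_inj (ℓ : ℕ) : ∀ m a b : ℕ, a < ℓ ^ m → b < ℓ ^ m →
    (∀ e, e < m → a / ℓ ^ e % ℓ = b / ℓ ^ e % ℓ) → a = b := by
  intro m
  induction m with
  | zero => intro a b ha hb _; simp [Nat.lt_one_iff] at ha hb; omega
  | succ m ih =>
    intro a b ha hb h
    have h0 := h 0 (Nat.succ_pos m)
    simp at h0
    have hq : a / ℓ = b / ℓ := by
      apply ih
      · exact Nat.div_lt_of_lt_mul (by rw [mul_comm, ← pow_succ]; exact ha)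
      · exact Nat.div_lt_of_lt_mul (by rw [mul_comm, ← pow_succ]; exact hb)
      · intro e he
        have h1 := h (e + 1) (by omega)
        rw [show ℓ ^ (e + 1) = ℓ * ℓ ^ e from by ring,
          ← Nat.div_div_eq_div_mul, ← Nat.div_div_eq_div_mul] at h1
        exact h1
    have h1 := Nat.div_add_mod a ℓ
    have h2 := Nat.div_add_mod b ℓ
    rw [hq, h0] at h1
    omega

/-- The truncation `M_r` (the first `r` cross sections of the complete tuple `M`) is
semi-complete: after applying any tuple of permutations it has at most one constant
cross section; consequently the Hamming distance of the corresponding tuple of sequence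
patterns is `r - 1`. -/
theorem Mr_semicomplete (ℓ k r : ℕ) (hℓ : 1 ≤ ℓ) (hk : 2 ≤ k)
    (hr1 : 1 ≤ r) (hr : r ≤ ℓ ^ (k - 1))
    (Mr : Fin k → Fin r → Fin ℓ)
    (hM : ∀ (j : Fin k) (i : Fin r),
      (Mr j i).val = (i.val / ℓ ^ (k - 1 - j.val)) % ℓ) :
    (∀ Φ : Fin k → Equiv.Perm (Fin ℓ), ∀ i i' : Fin r,
        IsConstant (crossSection (fun j => ⇑(Φ j) ∘ Mr j) i) →
        IsConstant (crossSection (fun j => ⇑(Φ j) ∘ Mr j) i') → i = i') ∧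
      patternTupleDist (fun j => Quotient.mk (seqSetoid r ℓ) (Mr j)) = r - 1 := by
  classical
  haveI : NeZero k := ⟨by omega⟩
  -- the first row is identically 0
  have h0 : ∀ i : Fin r, (Mr 0 i).val = 0 := by
    intro i
    have hlt : i.val < ℓ ^ (k - 1) := lt_of_lt_of_le i.isLt hr
    rw [hM]
    simp only [Fin.val_zero, Nat.sub_zero]
    rw [Nat.div_eq_of_lt hlt, Nat.zero_mod]
  have part1 : ∀ Φ : Fin k → Equiv.Perm (Fin ℓ), ∀ i i' : Fin r,
      IsConstant (crossSection (fun j => ⇑(Φ j) ∘ Mr j) i) →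
      IsConstant (crossSection (fun j => ⇑(Φ j) ∘ Mr j) i') → i = i' := by
    intro Φ i i' hc hc'
    have key : ∀ j : Fin k, Mr j i = Mr j i' := by
      intro j
      have h1 := hc j 0
      have h2 := hc' j 0
      simp only [crossSection, Function.comp_apply] at h1 h2
      have e0 : Mr 0 i = Mr 0 i' := Fin.ext (by rw [h0, h0])
      rw [e0] at h1
      exact (Φ j).injective (h1.trans h2.symm)
    apply Fin.ext
    apply digits_inj ℓ (k - 1)
    · exact lt_of_lt_of_le i.isLt hr
    · exact lt_of_lt_of_le i'.isLt hr
    · intro e he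
      have hj : k - 1 - (⟨k - 1 - e, by omega⟩ : Fin k).val = e := by
        simp; omega
      have := congrArg Fin.val (key ⟨k - 1 - e, by omega⟩)
      rwa [hM, hM, hj] at this
  refine ⟨part1, ?_⟩
  -- constant cross sections of any representative tuple form a subsingleton
  have hsub : ∀ Q : Fin k → Fin r → Fin ℓ,
      (∀ j, Quotient.mk (seqSetoid r ℓ) (Q j) = Quotient.mk (seqSetoid r ℓ) (Mr j)) →
      ∀ i i' : Fin r, (∀ j j', Q j i = Q j' i) → (∀ j j', Q j i' = Q j' i') → i = i' := by
    intro Q hQ i i' hci hci'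
    have hφ : ∀ j, ∃ φ : Equiv.Perm (Fin ℓ), ⇑φ ∘ Q j = Mr j := fun j =>
      Quotient.eq.mp (hQ j)
    choose φ hφ using hφ
    have hQeq : ∀ j, Q j = ⇑(φ j).symm ∘ Mr j := by
      intro j
      funext x
      have := congrFun (hφ j) x
      simp only [Function.comp_apply] at this ⊢
      rw [← this]; simp
    apply part1 (fun j => (φ j).symm) i i'
    · intro j j'
      simp only [crossSection]
      rw [← hQeq j, ← hQeq j']; exact hci j j'
    · intro j j'
      simp only [crossSection]
      rw [← hQeq j, ← hQeq j']; exact hci' j j'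
  -- lower bound for the distance of any representative tuple
  have hlow : ∀ Q : Fin k → Fin r → Fin ℓ,
      (∀ j, Quotient.mk (seqSetoid r ℓ) (Q j) = Quotient.mk (seqSetoid r ℓ) (Mr j)) →
      r - 1 ≤ tupleDist Q := by
    intro Q hQ
    have hcard1 : Nat.card {i : Fin r // ∀ j j' : Fin k, Q j i = Q j' i} ≤ 1 := by
      rw [Nat.card_eq_fintype_card, Fintype.card_le_one_iff_subsingleton]
      constructor
      rintro ⟨i, hi⟩ ⟨i', hi'⟩
      exact Subtype.ext (hsub Q hQ i i' hi hi')
    have hsplit : tupleDist Q +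
        Nat.card {i : Fin r // ∀ j j' : Fin k, Q j i = Q j' i} = r := by
      rw [tupleDist, Nat.card_eq_fintype_card, Nat.card_eq_fintype_card]
      rw [Fintype.card_subtype_compl]
      have hle : Fintype.card {i : Fin r // ∀ j j' : Fin k, Q j i = Q j' i} ≤
          Fintype.card (Fin r) := Fintype.card_subtype_le _
      simp only [Fintype.card_fin] at hle ⊢
      omega
    omega
  -- the canonical representative achieves r - 1
  have hMr : tupleDist Mr = r - 1 := by
    have hzero : ∀ j : Fin k, (Mr j ⟨0, hr1⟩).val = 0 := by
      intro j; rw [hM]; simp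
    have hconst : ∀ j j' : Fin k, Mr j ⟨0, hr1⟩ = Mr j' ⟨0, hr1⟩ := by
      intro j j'; exact Fin.ext (by rw [hzero, hzero])
    have hcard1 : Nat.card {i : Fin r // ∀ j j' : Fin k, Mr j i = Mr j' i} = 1 := by
      rw [Nat.card_eq_fintype_card, Fintype.card_eq_one_iff]
      refine ⟨⟨⟨0, hr1⟩, hconst⟩, ?_⟩
      rintro ⟨i, hi⟩
      refine Subtype.ext (hsub Mr (fun j => rfl) i ⟨0, hr1⟩ hi hconst)
    have hsplit : tupleDist Mr +
        Nat.card {i : Fin r // ∀ j j' : Fin k, Mr j i = Mr j' i} = r := by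
      rw [tupleDist, Nat.card_eq_fintype_card, Nat.card_eq_fintype_card]
      rw [Fintype.card_subtype_compl]
      have hle : Fintype.card {i : Fin r // ∀ j j' : Fin k, Mr j i = Mr j' i} ≤
          Fintype.card (Fin r) := Fintype.card_subtype_le _
      simp only [Fintype.card_fin] at hle ⊢
      omega
    omega
  -- compute the infimum
  have hmem : r - 1 ∈ {d | ∃ Q : Fin k → Fin r → Fin ℓ,
      (∀ j, Quotient.mk (seqSetoid r ℓ) (Q j) =
        (fun j => Quotient.mk (seqSetoid r ℓ) (Mr j)) j) ∧ tupleDist Q = d} :=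
    ⟨Mr, fun j => rfl, hMr⟩
  refine le_antisymm (Nat.sInf_le hmem) (le_csInf ⟨r - 1, hmem⟩ ?_)
  rintro d ⟨Q, hQ, rfl⟩
  exact hlow Q hQ
end

section
/- Let ℓ ≥ 1, k ≥ 2, and n ≥ 1, and let Q = (q_1,…,q_k) be any k-tuple of length-n level-ℓ sequences. Then there exists a k-tuple Φ = (φ_1,…,φ_k) of permutations of Fin ℓ such that the number of constant cross sections of Φ(Q) = (φ_1 ∘ q_1,…,φ_k ∘ q_k) is at least ⌈n / ℓ^{k−1}⌉. -/
/-!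
Work in `Fin ℓ` as the cyclic group `ℤ/ℓ` and use only the shift permutations `x ↦ x + a j`.
A cross section `c` becomes constant under the shift `a = (c j₀ - c j)_j`, which vanishes at a
fixed coordinate `j₀`. There are only `ℓ^(k-1)` such shifts, so by the pigeonhole principle one of
them makes at least `⌈n / ℓ^(k-1)⌉` cross sections constant.
-/

open Finset

theorem Finset.exists_ceilDiv_card_le_card_fiber_of_maps_to {α β : Type*} [DecidableEq β]
    {s : Finset α} {t : Finset β} {f : α → β} (hf : ∀ a ∈ s, f a ∈ t) (ht : t.Nonempty) :
    ∃ y ∈ t, #s ⌈/⌉ #t ≤ #{x ∈ s | f x = y} := by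
  obtain hzero | hpos := Nat.eq_zero_or_pos (#s ⌈/⌉ #t)
  · obtain ⟨y, hy⟩ := ht
    exact ⟨y, hy, by simp [hzero]⟩
  have hlt : #t * (#s ⌈/⌉ #t - 1) < #s := by
    by_contra! h
    have := (ceilDiv_le_iff_le_mul ht.card_pos).2 h
    omega
  obtain ⟨y, hy, hfiber⟩ := exists_lt_card_fiber_of_mul_lt_card_of_maps_to hf hlt
  exact ⟨y, hy, by omega⟩

theorem Fintype.card_filter_apply_eq {ι α : Type*} [Fintype ι] [DecidableEq ι] [Fintype α]
    [DecidableEq α] (i : ι) (x : α) :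
    #{f : ι → α | f i = x} = Fintype.card α ^ (Fintype.card ι - 1) := by
  simpa using card_filter_piFinset_const_eq_of_mem (univ : Finset α) i (mem_univ x)

namespace CrossSection

variable {n ℓ k : ℕ}

def normalizingShift (Q : Fin k → Fin n → Fin ℓ) (j₀ : Fin k) (i : Fin n) : Fin k → Fin ℓ :=
  fun j => Q j₀ i - Q j i

variable [NeZero ℓ]

theorem isConstant_of_normalizingShift_eq {Q : Fin k → Fin n → Fin ℓ} {j₀ : Fin k} {i : Fin n}
    {a : Fin k → Fin ℓ} (h : normalizingShift Q j₀ i = a) :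
    IsConstant (crossSection (fun j => ⇑(Equiv.addRight (a j)) ∘ Q j) i) := by
  subst h
  intro j j'
  simp [crossSection, normalizingShift]

theorem exists_shift_ceilDiv_le_card_isConstant (Q : Fin k → Fin n → Fin ℓ) (j₀ : Fin k) :
    ∃ a : Fin k → Fin ℓ, n ⌈/⌉ ℓ ^ (k - 1) ≤ Nat.card
      {i : Fin n // IsConstant (crossSection (fun j => ⇑(Equiv.addRight (a j)) ∘ Q j) i)} := by
  classical
  have hmaps : ∀ i ∈ (univ : Finset (Fin n)),
      normalizingShift Q j₀ i ∈ ({a : Fin k → Fin ℓ | a j₀ = 0} : Finset _) := by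
    simp [normalizingShift]
  obtain ⟨a, -, ha⟩ := exists_ceilDiv_card_le_card_fiber_of_maps_to hmaps ⟨0, by simp⟩
  refine ⟨a, ?_⟩
  rw [card_univ, Fintype.card_filter_apply_eq] at ha
  simp only [Fintype.card_fin] at ha
  rw [Nat.card_eq_fintype_card, Fintype.card_subtype]
  exact ha.trans <| card_le_card fun i hi => by
    simp only [mem_filter, mem_univ, true_and] at hi ⊢
    exact isConstant_of_normalizingShift_eq hi

end CrossSection

theorem exists_perms_many_constant_general (n ℓ k : ℕ) (hℓ : 1 ≤ ℓ) (hk : 2 ≤ k)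
    (Q : Fin k → Fin n → Fin ℓ) :
    ∃ Φ : Fin k → Equiv.Perm (Fin ℓ),
      (n + ℓ ^ (k - 1) - 1) / ℓ ^ (k - 1) ≤
        Nat.card {i : Fin n // IsConstant (crossSection (fun j => ⇑(Φ j) ∘ Q j) i)} := by
  have : NeZero ℓ := ⟨by omega⟩
  rw [← Nat.ceilDiv_eq_add_pred_div]
  obtain ⟨a, ha⟩ := CrossSection.exists_shift_ceilDiv_le_card_isConstant Q ⟨0, by omega⟩
  exact ⟨fun j => Equiv.addRight (a j), ha⟩

/-- For any `k`-tuple `Q` of length-`n` level-`ℓ` sequences there is a tuple of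
permutations `Φ` such that `Φ(Q)` has at least `⌈n / ℓ^(k-1)⌉` constant cross
sections. -/
theorem exists_perms_many_constant (n ℓ k : ℕ) (hℓ : 1 ≤ ℓ) (hk : 2 ≤ k) (hn : 1 ≤ n)
    (Q : Fin k → Fin n → Fin ℓ) :
    ∃ Φ : Fin k → Equiv.Perm (Fin ℓ),
      (n + ℓ ^ (k - 1) - 1) / ℓ ^ (k - 1) ≤
        Nat.card {i : Fin n // IsConstant (crossSection (fun j => ⇑(Φ j) ∘ Q j) i)} :=
  exists_perms_many_constant_general n ℓ k hℓ hk Q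
end

section
/- Let ℓ ≥ 1, k ≥ 2, and n ≥ 1. Then the maximal Hamming distance over all k-tuples of length-n level-ℓ sequence patterns equals n − ⌈n / ℓ^{k−1}⌉; that is, every k-tuple (t_1,…,t_k) of length-n level-ℓ sequence patterns satisfies d(t_1,…,t_k) ≤ n − ⌈n / ℓ^{k−1}⌉, and there exists a k-tuple of length-n level-ℓ sequence patterns attaining this value. -/
/-!
Normalising representatives so that the first sequence becomes a reference, each index `i` of a
`k`-tuple of sequences determines a difference vector `(q_{j+1}(i) - q_0(i))_j ∈ (ℤ/ℓ)^(k-1)`.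
By pigeonhole some vector is taken on at least `⌈n / ℓ^(k-1)⌉` indices, and shifting `q_{j+1}`
by that vector makes all sequences agree there. Conversely, if `q_0 = 0` and the column of the
`q_{j+1}` at `i` spells out `i mod ℓ^(k-1)` in base `ℓ`, then any representatives can only agree
on a single residue class modulo `ℓ^(k-1)`, which has at most `⌈n / ℓ^(k-1)⌉` elements.
-/

open Finset

theorem exists_ceil_div_le_card_fiber {α β : Type*} [Fintype α] [Fintype β] [DecidableEq β]
    [Nonempty β] (f : α → β) :
    ∃ y, (Fintype.card α + Fintype.card β - 1) / Fintype.card β ≤ #{x | f x = y} := by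
  have hβ : 0 < Fintype.card β := Fintype.card_pos
  rcases Nat.eq_zero_or_pos (Fintype.card α) with hα | hα
  · exact ⟨Classical.arbitrary β, by rw [hα, Nat.div_eq_of_lt (by omega)]; exact Nat.zero_le _⟩
  · obtain ⟨y, hy⟩ := Fintype.exists_lt_card_fiber_of_mul_lt_card f
      (n := (Fintype.card α - 1) / Fintype.card β) ((Nat.mul_div_le _ _).trans_lt (by omega))
    refine ⟨y, ?_⟩
    rwa [show Fintype.card α + Fintype.card β - 1 = Fintype.card α - 1 + Fintype.card β by omega,
      Nat.add_div_right _ hβ]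

theorem card_filter_val_mod_eq_le {m : ℕ} (hm : 0 < m) (n r : ℕ) :
    #{i : Fin n | i.val % m = r} ≤ (n + m - 1) / m := by
  calc #{i : Fin n | i.val % m = r}
      ≤ #(range ((n + m - 1) / m)) := by
        refine card_le_card_of_injOn (fun i => i.val / m) (fun i _ => ?_) fun i hi i' hi' h => ?_
        · rw [coe_range, Set.mem_Iio]
          calc i.val / m < i.val / m + 1 := Nat.lt_succ_self _
            _ = (i.val + m) / m := (Nat.add_div_right _ hm).symm
            _ ≤ (n + m - 1) / m := Nat.div_le_div_right (by omega)
        · simp only [coe_filter, mem_univ, true_and, Set.mem_ofPred_eq] at hi hi'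
          ext
          rw [← Nat.div_add_mod i.val m, ← Nat.div_add_mod i'.val m, hi, hi']
          simp only at h
          rw [h]
    _ = (n + m - 1) / m := card_range _

variable {n ℓ k : ℕ}

def agreementSet (Q : Fin k → Fin n → Fin ℓ) : Finset (Fin n) :=
  {i | ∀ j j', Q j i = Q j' i}

theorem tupleDist_eq_sub_card_agreementSet (Q : Fin k → Fin n → Fin ℓ) :
    tupleDist Q = n - #(agreementSet Q) := by
  rw [tupleDist, Nat.card_eq_fintype_card, Fintype.card_subtype_compl, Fintype.card_fin,
    Fintype.card_subtype]
  rfl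

theorem patternTupleDist_le_tupleDist {T : Fin k → SeqPattern n ℓ} {Q : Fin k → Fin n → Fin ℓ}
    (hQ : ∀ j, Quotient.mk _ (Q j) = T j) : patternTupleDist T ≤ tupleDist Q :=
  Nat.sInf_le ⟨Q, hQ, rfl⟩

theorem le_patternTupleDist {T : Fin k → SeqPattern n ℓ} {d : ℕ}
    (h : ∀ Q : Fin k → Fin n → Fin ℓ, (∀ j, Quotient.mk _ (Q j) = T j) → d ≤ tupleDist Q) :
    d ≤ patternTupleDist T :=
  le_csInf ⟨_, fun j => (T j).out, fun j => (T j).out_eq, rfl⟩ <| by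
    rintro _ ⟨Q, hQ, rfl⟩
    exact h Q hQ

theorem exists_equiv_forall_mem_agreementSet [NeZero ℓ] (Q : Fin (k + 1) → Fin n → Fin ℓ)
    (a : Fin k → Fin ℓ) :
    ∃ P : Fin (k + 1) → Fin n → Fin ℓ,
      (∀ j, Quotient.mk (seqSetoid n ℓ) (P j) = Quotient.mk _ (Q j)) ∧
        ∀ i, (∀ j, Q j.succ i - Q 0 i = a j) → i ∈ agreementSet P := by
  let φ : Fin (k + 1) → Equiv.Perm (Fin ℓ) :=
    Fin.cons (Equiv.refl _) fun j => Equiv.subRight (a j)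
  refine ⟨fun j => φ j ∘ Q j, fun j => (Quotient.sound (s := seqSetoid n ℓ) ⟨φ j, rfl⟩).symm,
    fun i hi => ?_⟩
  have h : ∀ j, φ j (Q j i) = Q 0 i := Fin.cases rfl fun j => by
    simp only [φ, Fin.cons_succ, Equiv.subRight_apply, ← hi j, sub_sub_cancel]
  simp [agreementSet, h]

theorem patternTupleDist_le [NeZero ℓ] (T : Fin (k + 1) → SeqPattern n ℓ) :
    patternTupleDist T ≤ n - (n + ℓ ^ k - 1) / ℓ ^ k := by
  let Q : Fin (k + 1) → Fin n → Fin ℓ := fun j => (T j).out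
  obtain ⟨a, ha⟩ :=
    exists_ceil_div_le_card_fiber fun (i : Fin n) (j : Fin k) => Q j.succ i - Q 0 i
  obtain ⟨P, hPQ, hagree⟩ := exists_equiv_forall_mem_agreementSet Q a
  have hP : ∀ j, Quotient.mk _ (P j) = T j := fun j => (hPQ j).trans (T j).out_eq
  have hcard : (n + ℓ ^ k - 1) / ℓ ^ k ≤ #(agreementSet P) := by
    simp only [Fintype.card_fin, Fintype.card_fun] at ha
    refine ha.trans (card_le_card fun i hi => hagree i fun j => ?_)
    exact congrFun (mem_filter.1 hi).2 j
  calc patternTupleDist T ≤ tupleDist P := patternTupleDist_le_tupleDist hP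
    _ = n - #(agreementSet P) := tupleDist_eq_sub_card_agreementSet P
    _ ≤ n - (n + ℓ ^ k - 1) / ℓ ^ k := Nat.sub_le_sub_left hcard n

def extremalTuple (n ℓ k : ℕ) [NeZero ℓ] : Fin (k + 1) → Fin n → Fin ℓ :=
  Fin.cons 0 fun j i => finFunctionFinEquiv.symm (Fin.ofNat (ℓ ^ k) i) j

theorem exists_agreementSet_subset_filter_mod_eq [NeZero ℓ] {P : Fin (k + 1) → Fin n → Fin ℓ}
    (hP : ∀ j, Quotient.mk _ (P j) = Quotient.mk (seqSetoid n ℓ) (extremalTuple n ℓ k j)) :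
    ∃ r, agreementSet P ⊆ ({i | i.val % ℓ ^ k = r} : Finset (Fin n)) := by
  choose φ hφ using fun j => Quotient.exact (hP j).symm
  let a : Fin k → Fin ℓ := fun j => (φ j.succ).symm (φ 0 0)
  refine ⟨(finFunctionFinEquiv a).val, fun i hi => ?_⟩
  have hdigits : finFunctionFinEquiv.symm (Fin.ofNat (ℓ ^ k) i) = a := funext fun j => by
    have h := (mem_filter.1 hi).2 j.succ 0
    rw [← hφ j.succ, ← hφ 0] at h
    exact (Equiv.eq_symm_apply _).2 (by simpa [extremalTuple] using h)
  simp [← hdigits]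

theorem patternTupleDist_extremalTuple [NeZero ℓ] :
    patternTupleDist (fun j => Quotient.mk (seqSetoid n ℓ) (extremalTuple n ℓ k j)) =
      n - (n + ℓ ^ k - 1) / ℓ ^ k := by
  refine le_antisymm (patternTupleDist_le _) (le_patternTupleDist fun P hP => ?_)
  obtain ⟨r, hr⟩ := exists_agreementSet_subset_filter_mod_eq hP
  rw [tupleDist_eq_sub_card_agreementSet]
  exact Nat.sub_le_sub_left ((card_le_card hr).trans
    (card_filter_val_mod_eq_le (Nat.pos_of_neZero _) n r)) n

theorem max_patternTupleDist_general (n ℓ k : ℕ) (hℓ : 1 ≤ ℓ) (hk : 2 ≤ k) :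
    (∀ T : Fin k → SeqPattern n ℓ,
        patternTupleDist T ≤ n - (n + ℓ ^ (k - 1) - 1) / ℓ ^ (k - 1)) ∧
      ∃ T : Fin k → SeqPattern n ℓ,
        patternTupleDist T = n - (n + ℓ ^ (k - 1) - 1) / ℓ ^ (k - 1) := by
  have : NeZero ℓ := ⟨by omega⟩
  obtain ⟨k, rfl⟩ : ∃ k', k = k' + 1 := ⟨k - 1, by omega⟩
  rw [Nat.add_sub_cancel]
  exact ⟨patternTupleDist_le, _, patternTupleDist_extremalTuple⟩

/-- The maximal Hamming distance over all `k`-tuples of length-`n` level-`ℓ` sequence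
patterns equals `n - ⌈n / ℓ^(k-1)⌉`: this value bounds the distance of every tuple of
patterns, and it is attained. -/
theorem max_patternTupleDist (n ℓ k : ℕ) (hℓ : 1 ≤ ℓ) (hk : 2 ≤ k) (hn : 1 ≤ n) :
    (∀ T : Fin k → SeqPattern n ℓ,
        patternTupleDist T ≤ n - (n + ℓ ^ (k - 1) - 1) / ℓ ^ (k - 1)) ∧
      ∃ T : Fin k → SeqPattern n ℓ,
        patternTupleDist T = n - (n + ℓ ^ (k - 1) - 1) / ℓ ^ (k - 1) :=
  max_patternTupleDist_general n ℓ k hℓ hk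
end

section
/- Let ℓ ≥ 1, k ≥ 2, and let Q = (q_1,…,q_k) be a k-tuple of length-n level-ℓ sequences. Then the maximum, over all k-tuples Φ of permutations of Fin ℓ, of the number of constant cross sections of Φ(Q) equals the maximum cardinality of a set I ⊆ Fin n such that the cross sections of Q at the indices in I are pairwise connected; consequently, the Hamming distance of the k-tuple of patterns (⟦q_1⟧,…,⟦q_k⟧) equals n minus this maximum cardinality. -/
/-!
If `Φ(Q)` is constant at `i` and `i'`, then in every row `q_j (i) = q_j (i')` holds iff the two
common values agree, so the cross sections of `Q` at `i` and `i'` are identical or incompatible.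
Conversely, on a pairwise connected index set every row `q_j` induces the same partition as a
fixed row `q_{j₀}`, so some permutation `φ_j` carries `q_j` to `q_{j₀}` there and makes all those
cross sections constant. The representatives of `⟦q_j⟧` are exactly the `φ_j ∘ q_j`, and the
Hamming distance is `n` minus the number of constant cross sections, which gives the formula
for the pattern distance.
-/

open Function Set

theorem Set.InjOn.exists_perm_eqOn {β : Type*} [Finite β] {s : Set β} {f : β → β}
    (hf : InjOn f s) : ∃ σ : Equiv.Perm β, EqOn σ f s := by
  have := Fintype.ofFinite β
  obtain ⟨g, hg⟩ := MapsTo.exists_equiv_extend_of_card_eq (t := Finset.univ)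
    Finset.card_univ.symm (fun x _ => Finset.mem_coe.2 (Finset.mem_univ (f x))) hf
  exact ⟨g.trans (Equiv.subtypeUnivEquiv Finset.mem_univ), hg⟩

theorem exists_perm_comp_eqOn {α β : Type*} [Finite β] {f g : α → β} {s : Set α}
    (hfg : ∀ a ∈ s, ∀ b ∈ s, f a = f b ↔ g a = g b) :
    ∃ σ : Equiv.Perm β, EqOn (σ ∘ f) g s := by
  have hfactors : FactorsThrough (s.domRestrict g) (s.domRestrict f) :=
    fun a b hab => (hfg a a.2 b b.2).1 hab
  set h := extend (s.domRestrict f) (s.domRestrict g) id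
  have hh : ∀ a : s, h (f a) = g a := hfactors.extend_apply id
  have hinj : InjOn h (range (s.domRestrict f)) := by
    rintro _ ⟨a, rfl⟩ _ ⟨b, rfl⟩ hab
    simp only [domRestrict_apply, hh] at hab ⊢
    exact (hfg a a.2 b b.2).2 hab
  obtain ⟨σ, hσ⟩ := hinj.exists_perm_eqOn
  exact ⟨σ, fun a ha => (hσ ⟨⟨a, ha⟩, rfl⟩).trans (hh ⟨a, ha⟩)⟩

section
variable {n ℓ k : ℕ}

theorem Connected.apply_eq_iff {c c' : Fin k → Fin ℓ} (h : Connected c c') (j j' : Fin k) :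
    c j = c' j ↔ c j' = c' j' := by
  rcases h with rfl | hinc
  · simp
  · exact iff_of_false (hinc j) (hinc j')

theorem connected_of_isConstant_perms (Φ : Fin k → Equiv.Perm (Fin ℓ)) {c c' : Fin k → Fin ℓ}
    (hc : IsConstant fun j => Φ j (c j)) (hc' : IsConstant fun j => Φ j (c' j)) :
    Connected c c' := by
  refine or_iff_not_imp_right.2 fun hinc => ?_
  obtain ⟨j, hj⟩ : ∃ j, c j = c' j := by simpa [Incompatible] using hinc
  funext j'
  exact (Φ j').injective <| (hc j' j).trans ((congrArg (Φ j) hj).trans (hc' j j'))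

theorem exists_perms_isConstant_of_connected (Q : Fin k → Fin n → Fin ℓ) {I : Set (Fin n)}
    (hI : ∀ i ∈ I, ∀ i' ∈ I, Connected (crossSection Q i) (crossSection Q i')) :
    ∃ Φ : Fin k → Equiv.Perm (Fin ℓ),
      ∀ i ∈ I, IsConstant (crossSection (fun j => ⇑(Φ j) ∘ Q j) i) := by
  rcases isEmpty_or_nonempty (Fin k) with _ | ⟨⟨j₀⟩⟩
  · exact ⟨1, fun _ _ j => isEmptyElim j⟩
  · choose Φ hΦ using fun j => exists_perm_comp_eqOn (f := Q j) (g := Q j₀) (s := I)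
      fun i hi i' hi' => (hI i hi i' hi').apply_eq_iff j j₀
    exact ⟨Φ, fun i hi j j' => (hΦ j hi).trans (hΦ j' hi).symm⟩

theorem tupleDist_eq_sub_card_isConstant (R : Fin k → Fin n → Fin ℓ) :
    tupleDist R = n - Nat.card {i : Fin n // IsConstant (crossSection R i)} := by
  classical
  rw [tupleDist, Nat.card_eq_fintype_card, Nat.card_eq_fintype_card]
  convert Fintype.card_subtype_compl fun i => IsConstant (crossSection R i)
  · exact Iff.rfl
  · exact (Fintype.card_fin n).symm

theorem exists_perms_of_mk_eq {R Q : Fin k → Fin n → Fin ℓ}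
    (h : ∀ j, Quotient.mk (seqSetoid n ℓ) (R j) = Quotient.mk _ (Q j)) :
    ∃ Φ : Fin k → Equiv.Perm (Fin ℓ), R = fun j => ⇑(Φ j) ∘ Q j := by
  choose Φ hΦ using fun j => Quotient.exact (h j).symm
  exact ⟨Φ, funext fun j => (hΦ j).symm⟩

theorem bddAbove_card_subtype_fin {ι : Type*} (P : ι → Fin n → Prop) :
    BddAbove {s | ∃ x, s = Nat.card {i : Fin n // P x i}} := by
  refine ⟨n, ?_⟩
  rintro _ ⟨x, rfl⟩
  simpa using Finite.card_subtype_le (P x)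

theorem sSup_card_isConstant_eq_sSup_card_connected (Q : Fin k → Fin n → Fin ℓ) :
    sSup {s : ℕ | ∃ Φ : Fin k → Equiv.Perm (Fin ℓ),
        s = Nat.card {i : Fin n // IsConstant (crossSection (fun j => ⇑(Φ j) ∘ Q j) i)}} =
      sSup {s : ℕ | ∃ I : Finset (Fin n),
        (∀ i ∈ I, ∀ i' ∈ I, Connected (crossSection Q i) (crossSection Q i')) ∧
          s = I.card} := by
  classical
  apply le_antisymm
  · refine csSup_le ⟨_, 1, rfl⟩ ?_
    rintro _ ⟨Φ, rfl⟩
    refine le_csSup ⟨n, ?_⟩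
      ⟨Finset.univ.filter fun i => IsConstant (crossSection (fun j => ⇑(Φ j) ∘ Q j) i), ?_, ?_⟩
    · rintro _ ⟨I, -, rfl⟩
      exact I.card_le_univ.trans_eq (Fintype.card_fin n)
    · intro i hi i' hi'
      exact connected_of_isConstant_perms Φ (Finset.mem_filter.1 hi).2 (Finset.mem_filter.1 hi').2
    · rw [Nat.card_eq_fintype_card, Fintype.card_subtype]
  · refine csSup_le ⟨0, ∅, by simp, rfl⟩ ?_
    rintro _ ⟨I, hI, rfl⟩
    obtain ⟨Φ, hΦ⟩ := exists_perms_isConstant_of_connected Q (I := I) hI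
    refine le_csSup_of_le (bddAbove_card_subtype_fin _) ⟨Φ, rfl⟩ ?_
    rw [Nat.card_eq_fintype_card, Fintype.card_subtype]
    exact Finset.card_le_card fun i hi => Finset.mem_filter.2 ⟨Finset.mem_univ i, hΦ i hi⟩

theorem patternTupleDist_mk_eq_sub_sSup_card_isConstant (Q : Fin k → Fin n → Fin ℓ) :
    patternTupleDist (fun j => Quotient.mk (seqSetoid n ℓ) (Q j)) =
      n - sSup {s : ℕ | ∃ Φ : Fin k → Equiv.Perm (Fin ℓ),
        s = Nat.card {i : Fin n // IsConstant (crossSection (fun j => ⇑(Φ j) ∘ Q j) i)}} := by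
  have hbdd := bddAbove_card_subtype_fin fun (Φ : Fin k → Equiv.Perm (Fin ℓ)) i =>
    IsConstant (crossSection (fun j => ⇑(Φ j) ∘ Q j) i)
  obtain ⟨Φ₀, hΦ₀⟩ := Nat.sSup_mem (by exact ⟨_, 1, rfl⟩) hbdd
  rw [hΦ₀]
  apply le_antisymm
  · refine Nat.sInf_le ⟨fun j => ⇑(Φ₀ j) ∘ Q j, fun j => ?_, tupleDist_eq_sub_card_isConstant _⟩
    exact Quotient.sound ⟨(Φ₀ j).symm, by ext; simp⟩
  · refine le_csInf ⟨_, Q, fun _ => rfl, rfl⟩ ?_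
    rintro _ ⟨R, hR, rfl⟩
    obtain ⟨Φ, rfl⟩ := exists_perms_of_mk_eq hR
    rw [tupleDist_eq_sub_card_isConstant]
    exact Nat.sub_le_sub_left (hΦ₀ ▸ le_csSup hbdd ⟨Φ, rfl⟩) n

end

theorem patternTupleDist_eq_sub_max_connected_general (n ℓ k : ℕ)
    (Q : Fin k → Fin n → Fin ℓ) :
    sSup {s : ℕ | ∃ Φ : Fin k → Equiv.Perm (Fin ℓ),
        s = Nat.card {i : Fin n // IsConstant (crossSection (fun j => ⇑(Φ j) ∘ Q j) i)}} =
      sSup {s : ℕ | ∃ I : Finset (Fin n),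
        (∀ i ∈ I, ∀ i' ∈ I, Connected (crossSection Q i) (crossSection Q i')) ∧
          s = I.card} ∧
      patternTupleDist (fun j => Quotient.mk (seqSetoid n ℓ) (Q j)) =
        n - sSup {s : ℕ | ∃ I : Finset (Fin n),
          (∀ i ∈ I, ∀ i' ∈ I, Connected (crossSection Q i) (crossSection Q i')) ∧
            s = I.card} := by
  rw [← sSup_card_isConstant_eq_sSup_card_connected]
  exact ⟨rfl, patternTupleDist_mk_eq_sub_sSup_card_isConstant Q⟩

/-- The maximal number of constant cross sections of `Φ(Q)` over all tuples of
permutations `Φ` equals the maximal cardinality of a set of indices whose cross sections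
in `Q` are pairwise connected; consequently, the Hamming distance of the tuple of
patterns generated by `Q` is `n` minus this maximal cardinality. -/
theorem patternTupleDist_eq_sub_max_connected (n ℓ k : ℕ) (hℓ : 1 ≤ ℓ) (hk : 2 ≤ k)
    (Q : Fin k → Fin n → Fin ℓ) :
    sSup {s : ℕ | ∃ Φ : Fin k → Equiv.Perm (Fin ℓ),
        s = Nat.card {i : Fin n // IsConstant (crossSection (fun j => ⇑(Φ j) ∘ Q j) i)}} =
      sSup {s : ℕ | ∃ I : Finset (Fin n),
        (∀ i ∈ I, ∀ i' ∈ I, Connected (crossSection Q i) (crossSection Q i')) ∧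
          s = I.card} ∧
      patternTupleDist (fun j => Quotient.mk (seqSetoid n ℓ) (Q j)) =
        n - sSup {s : ℕ | ∃ I : Finset (Fin n),
          (∀ i ∈ I, ∀ i' ∈ I, Connected (crossSection Q i) (crossSection Q i')) ∧
            s = I.card} :=
  patternTupleDist_eq_sub_max_connected_general n ℓ k Q
end
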